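/- arXiv:1601.02582 — 10 statements merged into one kernel-verified Lean document; each statement's English description precedes it below -/
import Mathlib

section
/- For every positive integer n ≥ 2 and every angle α with 0 < α < π/2, the inequality (1/n) sin(α) cos(α/n) > cos(α) sin(α/n) holds. -/
/-! With `c = 1/n`, the function `f x = c sin x cos (c x) - cos x sin (c x)` vanishes at `0`
and has derivative `(1 - c²) sin x sin (c x)`, which is positive on `(0, π)` when `0 < c < 1`.
Hence `f` is strictly increasing on `[0, π]`, and so positive at every `α ∈ (0, π]`. -/

open Real

lemma hasDerivAt_mul_sin_mul_cos_sub_cos_mul_sin (c x : ℝ) :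
    HasDerivAt (fun y => c * sin y * cos (c * y) - cos y * sin (c * y))
      ((1 - c ^ 2) * sin x * sin (c * x)) x := by
  have hcy : HasDerivAt (fun y => c * y) c x := by simpa using (hasDerivAt_id x).const_mul c
  have hcos : HasDerivAt (fun y => cos (c * y)) (-sin (c * x) * c) x :=
    (hasDerivAt_cos (c * x)).comp x hcy
  have hsin : HasDerivAt (fun y => sin (c * y)) (cos (c * x) * c) x :=
    (hasDerivAt_sin (c * x)).comp x hcy
  refine ((((hasDerivAt_sin x).const_mul c).mul hcos).sub
    ((hasDerivAt_cos x).mul hsin)).congr_deriv ?_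
  ring

lemma strictMonoOn_mul_sin_mul_cos_sub_cos_mul_sin {c : ℝ} (hc0 : 0 < c) (hc1 : c < 1) :
    StrictMonoOn (fun y => c * sin y * cos (c * y) - cos y * sin (c * y)) (Set.Icc 0 π) := by
  refine strictMonoOn_of_deriv_pos (convex_Icc 0 π) (by fun_prop) fun x hx => ?_
  rw [interior_Icc] at hx
  rw [(hasDerivAt_mul_sin_mul_cos_sub_cos_mul_sin c x).deriv]
  have hsin : 0 < sin x := sin_pos_of_pos_of_lt_pi hx.1 hx.2
  have hsin_c : 0 < sin (c * x) :=
    sin_pos_of_pos_of_lt_pi (by nlinarith [hx.1]) (by nlinarith [hx.1, hx.2])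
  have hc_sq : 0 < 1 - c ^ 2 := by nlinarith
  positivity

lemma cos_mul_sin_mul_lt {c x : ℝ} (hc0 : 0 < c) (hc1 : c < 1) (hx0 : 0 < x) (hxπ : x ≤ π) :
    cos x * sin (c * x) < c * sin x * cos (c * x) := by
  have h := strictMonoOn_mul_sin_mul_cos_sub_cos_mul_sin hc0 hc1
    ⟨le_rfl, pi_pos.le⟩ ⟨hx0.le, hxπ⟩ hx0
  simp only [mul_zero, sin_zero, cos_zero] at h
  linarith

theorem stmt_2 (n : ℕ) (hn : 2 ≤ n) (α : ℝ) (h0 : 0 < α) (h1 : α < π / 2) :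
    (1 / n) * Real.sin α * Real.cos (α / n) > Real.cos α * Real.sin (α / n) := by
  have hn' : (2 : ℝ) ≤ n := by exact_mod_cast hn
  have hc0 : (0 : ℝ) < 1 / n := by positivity
  have hc1 : (1 : ℝ) / n < 1 := by rw [div_lt_one (by linarith)]; linarith
  have key := cos_mul_sin_mul_lt hc0 hc1 h0 (by linarith [pi_pos])
  rwa [one_div_mul_eq_div] at key
end

section
/- Let n, r be integers with 2 ≤ r < n, and set φ(θ) = ((n-1)π + rθ)/n. For θ ∈ (0, π/r), both sin(θ)/sin(φ(θ)-θ) and sin(θ)/sin(φ(θ)) are strictly increasing functions of θ, and hence z(θ) = (sin θ)^n / (sin^{n-r}(φ(θ)-θ) · sin^r(φ(θ))) is strictly increasing on (0, π/r). -/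
/-! With `T = π / r` and `m = r / n ∈ (0, 1)` one has `φ θ - θ = π - (m T + (1 - m) θ)` and
`φ θ = π - m (T - θ)`, so both denominators are sines of angles in `(0, π / 2)` as `θ` ranges
over `(0, T) ⊆ (0, π / 2)`. The quotient rule then reduces each monotonicity claim to the
positivity of an expression in sines and cosines of acute angles, and `z` is the product of the
`(n - r)`-th power of the first quotient and the `r`-th power of the second. -/

open Real Set

lemma strictMonoOn_div_of_hasDerivAt {f g f' g' : ℝ → ℝ} {s : Set ℝ}
    (hs : Convex ℝ s) (hso : IsOpen s)
    (hf : ∀ x ∈ s, HasDerivAt f (f' x) x) (hg : ∀ x ∈ s, HasDerivAt g (g' x) x)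
    (hg0 : ∀ x ∈ s, g x ≠ 0) (hpos : ∀ x ∈ s, 0 < f' x * g x - f x * g' x) :
    StrictMonoOn (fun x => f x / g x) s := by
  have hdiv : ∀ x ∈ s, HasDerivAt (fun x => f x / g x)
      ((f' x * g x - f x * g' x) / g x ^ 2) x :=
    fun x hx => (hf x hx).div (hg x hx) (hg0 x hx)
  refine strictMonoOn_of_deriv_pos hs
    (fun x hx => (hdiv x hx).continuousAt.continuousWithinAt) fun x hx => ?_
  rw [hso.interior_eq] at hx
  rw [(hdiv x hx).deriv]
  exact div_pos (hpos x hx) (sq_pos_of_ne_zero (hg0 x hx))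

lemma StrictMonoOn.pow_mul_pow {f g : ℝ → ℝ} {s : Set ℝ} (hf : StrictMonoOn f s)
    (hg : StrictMonoOn g s) (hf0 : ∀ x ∈ s, 0 < f x) (hg0 : ∀ x ∈ s, 0 < g x)
    {p q : ℕ} (hp : p ≠ 0) (hq : q ≠ 0) :
    StrictMonoOn (fun x => f x ^ p * g x ^ q) s := fun x hx _ hy hxy =>
  mul_lt_mul'' (pow_lt_pow_left₀ (hf hx hy hxy) (hf0 x hx).le hp)
    (pow_lt_pow_left₀ (hg hx hy hxy) (hg0 x hx).le hq)
    (pow_nonneg (hf0 x hx).le p) (pow_nonneg (hg0 x hx).le q)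

section AcuteAngles

variable {m T θ : ℝ}

lemma sin_mul_add_one_sub_mul_pos (hm0 : 0 < m) (hm1 : m < 1) (hT : T ≤ π)
    (hθ : θ ∈ Ioo 0 T) : 0 < sin (m * T + (1 - m) * θ) := by
  obtain ⟨h0, hθT⟩ := hθ
  refine sin_pos_of_pos_of_lt_pi ?_ ?_ <;> nlinarith [pi_pos]

lemma sin_mul_sub_pos (hm0 : 0 < m) (hm1 : m < 1) (hT : T ≤ π) (hθ : θ ∈ Ioo 0 T) :
    0 < sin (m * (T - θ)) := by
  obtain ⟨h0, hθT⟩ := hθ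
  refine sin_pos_of_pos_of_lt_pi ?_ ?_ <;> nlinarith [pi_pos]

lemma sin_pos_of_mem_Ioo (hT : T ≤ π) (hθ : θ ∈ Ioo 0 T) : 0 < sin θ :=
  sin_pos_of_pos_of_lt_pi hθ.1 (hθ.2.trans_le hT)

variable (T) in
lemma strictMonoOn_sin_div_sin_mul_add_one_sub_mul (hm0 : 0 < m) (hm1 : m < 1)
    (hT : T ≤ π / 2) :
    StrictMonoOn (fun θ => sin θ / sin (m * T + (1 - m) * θ)) (Ioo 0 T) := by
  have hTπ : T ≤ π := by linarith [pi_pos]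
  refine strictMonoOn_div_of_hasDerivAt (convex_Ioo 0 T) isOpen_Ioo
    (fun θ _ => hasDerivAt_sin θ)
    (fun θ _ => (((hasDerivAt_id θ).const_mul (1 - m)).const_add (m * T)).sin)
    (fun θ hθ => (sin_mul_add_one_sub_mul_pos hm0 hm1 hTπ hθ).ne') fun θ hθ => ?_
  have hcos : 0 < cos (m * T + (1 - m) * θ) :=
    cos_pos_of_mem_Ioo ⟨by nlinarith [hθ.1, hθ.2, pi_pos], by nlinarith [hθ.1, hθ.2]⟩
  -- with `u = m T + (1 - m) θ`, the numerator is `sin (u - θ) + m sin θ cos u`,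
  -- and `u - θ = m (T - θ)`
  have hnum : sin (m * (T - θ)) = sin (m * T + (1 - m) * θ) * cos θ
      - cos (m * T + (1 - m) * θ) * sin θ := by
    rw [← sin_sub]; ring_nf
  simp only [id]
  linarith [sin_mul_sub_pos hm0 hm1 hTπ hθ,
    mul_pos hm0 (mul_pos (sin_pos_of_mem_Ioo hTπ hθ) hcos)]

variable (T) in
lemma strictMonoOn_sin_div_sin_mul_sub (hm0 : 0 < m) (hm1 : m < 1) (hT : T ≤ π / 2) :
    StrictMonoOn (fun θ => sin θ / sin (m * (T - θ))) (Ioo 0 T) := by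
  have hTπ : T ≤ π := by linarith [pi_pos]
  refine strictMonoOn_div_of_hasDerivAt (convex_Ioo 0 T) isOpen_Ioo
    (fun θ _ => hasDerivAt_sin θ)
    (fun θ _ => (((hasDerivAt_id θ).const_sub T).const_mul m).sin)
    (fun θ hθ => (sin_mul_sub_pos hm0 hm1 hTπ hθ).ne') fun θ hθ => ?_
  obtain ⟨h0, hθT⟩ := hθ
  have hcosθ : 0 < cos θ := cos_pos_of_mem_Ioo ⟨by linarith [pi_pos], by linarith⟩
  have hcos : 0 < cos (m * (T - θ)) := cos_pos_of_mem_Ioo ⟨by nlinarith [pi_pos], by nlinarith⟩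
  simp only [id]
  linarith [mul_pos hcosθ (sin_mul_sub_pos hm0 hm1 hTπ ⟨h0, hθT⟩),
    mul_pos hm0 (mul_pos (sin_pos_of_mem_Ioo hTπ ⟨h0, hθT⟩) hcos)]

end AcuteAngles

theorem stmt_6 (n r : ℕ) (hr : 2 ≤ r) (hrn : r < n) (φ : ℝ → ℝ)
    (hφ : ∀ θ, φ θ = (((n : ℝ) - 1) * π + r * θ) / n) :
    StrictMonoOn (fun θ => Real.sin θ / Real.sin (φ θ - θ)) (Set.Ioo 0 (π / r)) ∧
    StrictMonoOn (fun θ => Real.sin θ / Real.sin (φ θ)) (Set.Ioo 0 (π / r)) ∧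
    StrictMonoOn
      (fun θ => (Real.sin θ) ^ n /
        ((Real.sin (φ θ - θ)) ^ (n - r) * (Real.sin (φ θ)) ^ r))
      (Set.Ioo 0 (π / r)) := by
  have hr0 : (0 : ℝ) < r := by positivity
  have hn0 : (0 : ℝ) < n := by exact_mod_cast (by omega : 0 < n)
  obtain ⟨m, hm⟩ : ∃ m : ℝ, m = r / n := ⟨_, rfl⟩
  have hm0 : 0 < m := hm ▸ div_pos hr0 hn0
  have hm1 : m < 1 := hm ▸ (div_lt_one hn0).2 (by exact_mod_cast hrn)
  have hT : π / r ≤ π / 2 := div_le_div_of_nonneg_left pi_pos.le two_pos (by exact_mod_cast hr)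
  have hsin_sub (θ : ℝ) : sin (φ θ - θ) = sin (m * (π / r) + (1 - m) * θ) := by
    rw [← sin_pi_sub, hφ, hm]; congr 1; field_simp; ring
  have hsin (θ : ℝ) : sin (φ θ) = sin (m * (π / r - θ)) := by
    rw [← sin_pi_sub, hφ, hm]; congr 1; field_simp; ring
  have hTπ : π / r ≤ π := hT.trans (half_le_self pi_pos.le)
  simp only [hsin_sub, hsin]
  have h1 := strictMonoOn_sin_div_sin_mul_add_one_sub_mul (π / r) hm0 hm1 hT
  have h2 := strictMonoOn_sin_div_sin_mul_sub (π / r) hm0 hm1 hT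
  refine ⟨h1, h2, ?_⟩
  convert h1.pow_mul_pow h2
    (fun θ hθ => div_pos (sin_pos_of_mem_Ioo hTπ hθ)
      (sin_mul_add_one_sub_mul_pos hm0 hm1 hTπ hθ))
    (fun θ hθ => div_pos (sin_pos_of_mem_Ioo hTπ hθ) (sin_mul_sub_pos hm0 hm1 hTπ hθ))
    (by omega : n - r ≠ 0) (by omega : r ≠ 0) using 2 with θ
  rw [div_pow, div_pow, div_mul_div_comm, ← pow_add, Nat.sub_add_cancel hrn.le]
end

section
/- Let n ≥ 2, r = 1, and φ(θ) = ((n-1)π + θ)/n. The function z(θ) = (sin θ)^n / (sin^{n-1}(φ(θ)-θ) · sin(φ(θ))) is strictly increasing on (0, π) and maps (0, π) onto (0, n^n/(n-1)^{n-1}). -/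
/-!
Put `u = π - θ`, `a = (n - 1) / n` and `b = 1 / n`, so that
`z θ = (sin u / sin (a u)) ^ (n - 1) * (sin u / sin (b u))`. For `0 < c < 1` the ratio
`sin u / sin (c u)` is positive and strictly decreasing on `(0, π)`: its derivative has the sign of
`cos u sin (c u) - c sin u cos (c u)`, which vanishes at `0` and has derivative
`-(1 - c²) sin u sin (c u) < 0`. Hence `z` is strictly increasing; it tends to `0` as `θ → 0` and
to `a⁻¹ ^ (n - 1) * b⁻¹ = n ^ n / (n - 1) ^ (n - 1)` as `θ → π`, and the intermediate value
theorem gives the image.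
-/

open Real Set Filter Topology

section ImageOfTendsto

variable {α β : Type*} [ConditionallyCompleteLinearOrder α] [TopologicalSpace α] [OrderTopology α]
  [DenselyOrdered α] [LinearOrder β] [TopologicalSpace β] [OrderClosedTopology β]
  {f : α → β} {a b : α} {A B : β}

theorem StrictMonoOn.image_Ioo_eq_of_tendsto (hab : a < b) (hf : StrictMonoOn f (Ioo a b))
    (hcont : ContinuousOn f (Ioo a b)) (ha : Tendsto f (𝓝[>] a) (𝓝 A))
    (hb : Tendsto f (𝓝[<] b) (𝓝 B)) : f '' Ioo a b = Ioo A B := by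
  have : NeBot (𝓝[>] a) := nhdsGT_neBot_of_exists_gt ⟨b, hab⟩
  have : NeBot (𝓝[<] b) := nhdsLT_neBot_of_exists_lt ⟨a, hab⟩
  apply Subset.antisymm
  · rintro _ ⟨x, hx, rfl⟩
    obtain ⟨y, hay, hyx⟩ := exists_between hx.1
    obtain ⟨w, hxw, hwb⟩ := exists_between hx.2
    have hy : y ∈ Ioo a b := ⟨hay, hyx.trans hx.2⟩
    have hw : w ∈ Ioo a b := ⟨hx.1.trans hxw, hwb⟩
    have hAy : A ≤ f y := le_of_tendsto ha <| by
      filter_upwards [Ioo_mem_nhdsGT hay] with t ht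
      exact (hf ⟨ht.1, ht.2.trans hy.2⟩ hy ht.2).le
    have hwB : f w ≤ B := ge_of_tendsto hb <| by
      filter_upwards [Ioo_mem_nhdsLT hwb] with t ht
      exact (hf hw ⟨hw.1.trans ht.1, ht.2⟩ ht.1).le
    exact ⟨hAy.trans_lt (hf hy hx hyx), (hf hx hw hxw).trans_le hwB⟩
  · intro c hc
    obtain ⟨x, hxc, hx⟩ :=
      ((ha.eventually (eventually_lt_nhds hc.1)).and (Ioo_mem_nhdsGT hab)).exists
    obtain ⟨y, hcy, hy⟩ :=
      ((hb.eventually (eventually_gt_nhds hc.2)).and (Ioo_mem_nhdsLT hab)).exists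
    have hxy : x ≤ y := ((hf.lt_iff_lt hx hy).1 (hxc.trans hcy)).le
    have hsub : Icc x y ⊆ Ioo a b := Icc_subset_Ioo hx.1 hy.2
    obtain ⟨t, ht, rfl⟩ := intermediate_value_Icc hxy (hcont.mono hsub) ⟨hxc.le, hcy.le⟩
    exact ⟨t, hsub ht, rfl⟩

end ImageOfTendsto

theorem StrictAntiOn.pow_mul {α : Type*} [Preorder α] {f g : α → ℝ} {s : Set α}
    (hf : StrictAntiOn f s) (hg : StrictAntiOn g s) (hf0 : ∀ x ∈ s, 0 < f x)
    (hg0 : ∀ x ∈ s, 0 ≤ g x) (m : ℕ) : StrictAntiOn (fun x => f x ^ m * g x) s :=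
  fun _ hx _ hy hxy => mul_lt_mul' (pow_le_pow_left₀ (hf0 _ hy).le (hf hx hy hxy).le m)
    (hg hx hy hxy) (hg0 _ hy) (pow_pos (hf0 _ hx) m)

section SinRatio

variable {c u : ℝ}

theorem sin_mul_pos_of_mem_Ioc (hc : c ∈ Ioo 0 1) (hu : u ∈ Ioc 0 π) : 0 < sin (c * u) :=
  sin_pos_of_pos_of_lt_pi (mul_pos hc.1 hu.1)
    (by nlinarith [hc.1, hc.2, hu.1, hu.2])

theorem cos_mul_sin_mul_lt_s7 (hc : c ∈ Ioo 0 1) (hu : u ∈ Ioo 0 π) :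
    cos u * sin (c * u) < c * sin u * cos (c * u) := by
  let h : ℝ → ℝ := fun u => cos u * sin (c * u) - c * sin u * cos (c * u)
  have hderiv (x : ℝ) : HasDerivAt h (-(1 - c ^ 2) * sin x * sin (c * x)) x := by
    have hcx : HasDerivAt (fun x => c * x) c x := by simpa using (hasDerivAt_id x).const_mul c
    exact (((hasDerivAt_cos x).mul ((hasDerivAt_sin (c * x)).comp x hcx)).sub
      (((hasDerivAt_sin x).const_mul c).mul ((hasDerivAt_cos (c * x)).comp x hcx))).congr_deriv
      (by simp only [Function.comp_apply]; ring)
  have hanti : StrictAntiOn h (Icc 0 π) := by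
    refine strictAntiOn_of_hasDerivWithinAt_neg (convex_Icc 0 π) (by fun_prop)
      (fun x _ => (hderiv x).hasDerivWithinAt) fun x hx => ?_
    rw [interior_Icc] at hx
    have hc2 : 0 < 1 - c ^ 2 := by nlinarith [hc.1, hc.2]
    have := mul_pos (mul_pos hc2 (sin_pos_of_pos_of_lt_pi hx.1 hx.2))
      (sin_mul_pos_of_mem_Ioc hc (Ioo_subset_Ioc_self hx))
    linarith
  have := hanti (left_mem_Icc.2 pi_pos.le) (Ioo_subset_Icc_self hu) hu.1
  simp only [h, mul_zero, sin_zero, cos_zero] at this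
  linarith

noncomputable def sinRatio (c u : ℝ) : ℝ := sin u / sin (c * u)

theorem sinRatio_pos (hc : c ∈ Ioo 0 1) (hu : u ∈ Ioo 0 π) : 0 < sinRatio c u :=
  div_pos (sin_pos_of_pos_of_lt_pi hu.1 hu.2) (sin_mul_pos_of_mem_Ioc hc (Ioo_subset_Ioc_self hu))

theorem continuousAt_sinRatio (h : sin (c * u) ≠ 0) : ContinuousAt (sinRatio c) u :=
  continuous_sin.continuousAt.div (by fun_prop) h

theorem strictAntiOn_sinRatio (hc : c ∈ Ioo 0 1) : StrictAntiOn (sinRatio c) (Ioo 0 π) := by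
  have hsin {x} (hx : x ∈ Ioo 0 π) : sin (c * x) ≠ 0 :=
    (sin_mul_pos_of_mem_Ioc hc (Ioo_subset_Ioc_self hx)).ne'
  refine strictAntiOn_of_hasDerivWithinAt_neg (convex_Ioo 0 π)
    (fun x hx => (continuousAt_sinRatio (hsin hx)).continuousWithinAt)
    (f' := fun x => (cos x * sin (c * x) - sin x * (cos (c * x) * c)) / sin (c * x) ^ 2)
    (fun x hx => ?_) fun x hx => ?_ <;> rw [interior_Ioo] at hx
  · have hcx : HasDerivAt (fun x => c * x) c x := by simpa using (hasDerivAt_id x).const_mul c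
    exact ((hasDerivAt_sin x).div ((hasDerivAt_sin (c * x)).comp x hcx) (hsin hx)).hasDerivWithinAt
  · have := cos_mul_sin_mul_lt_s7 hc hx
    exact div_neg_of_neg_of_pos (by linarith)
      (pow_pos (sin_mul_pos_of_mem_Ioc hc (Ioo_subset_Ioc_self hx)) 2)

theorem tendsto_sinRatio_nhdsNE (hc : c ≠ 0) : Tendsto (sinRatio c) (𝓝[≠] 0) (𝓝 c⁻¹) := by
  have hcont : ContinuousAt (fun u => sinc u / (c * sinc (c * u))) 0 :=
    continuous_sinc.continuousAt.div (by fun_prop) (by simp [hc])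
  have hlim := hcont.tendsto.mono_left (nhdsWithin_le_nhds (s := {0}ᶜ))
  simp only [sinc_zero, mul_zero, mul_one, one_div] at hlim
  refine hlim.congr' ?_
  filter_upwards [self_mem_nhdsWithin] with u hu
  rw [sinRatio, sinc_of_ne_zero hu, sinc_of_ne_zero (mul_ne_zero hc hu), mul_div_assoc',
    mul_div_mul_left _ _ hc, div_div_div_cancel_right₀ hu]

end SinRatio

section SinRatioProd

variable {a b u : ℝ}

noncomputable def sinRatioProd (m : ℕ) (a b u : ℝ) : ℝ := sinRatio a u ^ m * sinRatio b u

theorem strictAntiOn_sinRatioProd (ha : a ∈ Ioo 0 1) (hb : b ∈ Ioo 0 1) (m : ℕ) :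
    StrictAntiOn (sinRatioProd m a b) (Ioo 0 π) :=
  (strictAntiOn_sinRatio ha).pow_mul (strictAntiOn_sinRatio hb) (fun _ => sinRatio_pos ha)
    (fun _ hu => (sinRatio_pos hb hu).le) m

theorem continuousAt_sinRatioProd (ha : a ∈ Ioo 0 1) (hb : b ∈ Ioo 0 1) (m : ℕ)
    (hu : u ∈ Ioc 0 π) : ContinuousAt (sinRatioProd m a b) u :=
  ((continuousAt_sinRatio (sin_mul_pos_of_mem_Ioc ha hu).ne').pow m).mul
    (continuousAt_sinRatio (sin_mul_pos_of_mem_Ioc hb hu).ne')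

theorem tendsto_sinRatioProd_nhdsNE (ha : a ≠ 0) (hb : b ≠ 0) (m : ℕ) :
    Tendsto (sinRatioProd m a b) (𝓝[≠] 0) (𝓝 (a⁻¹ ^ m * b⁻¹)) :=
  ((tendsto_sinRatio_nhdsNE ha).pow m).mul (tendsto_sinRatio_nhdsNE hb)

theorem strictMonoOn_sinRatioProd_pi_sub (ha : a ∈ Ioo 0 1) (hb : b ∈ Ioo 0 1) (m : ℕ) :
    StrictMonoOn (fun θ => sinRatioProd m a b (π - θ)) (Ioo 0 π) := fun x hx y hy hxy =>
  strictAntiOn_sinRatioProd ha hb m ⟨by linarith [hy.2], by linarith [hy.1]⟩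
    ⟨by linarith [hx.2], by linarith [hx.1]⟩ (by linarith)

theorem image_sinRatioProd_pi_sub (ha : a ∈ Ioo 0 1) (hb : b ∈ Ioo 0 1) (m : ℕ) :
    (fun θ => sinRatioProd m a b (π - θ)) '' Ioo 0 π = Ioo 0 (a⁻¹ ^ m * b⁻¹) := by
  have hcont (θ : ℝ) (hθ : θ ∈ Ico 0 π) : ContinuousAt (fun θ => sinRatioProd m a b (π - θ)) θ :=
    (continuousAt_sinRatioProd ha hb m ⟨by linarith [hθ.2], by linarith [hθ.1]⟩).comp
      (by fun_prop)
  refine (strictMonoOn_sinRatioProd_pi_sub ha hb m).image_Ioo_eq_of_tendsto pi_pos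
    (fun θ hθ => (hcont θ (Ioo_subset_Ico_self hθ)).continuousWithinAt) ?_ ?_
  · have hpi : sinRatioProd m a b (π - 0) = 0 := by simp [sinRatioProd, sinRatio]
    simpa only [hpi] using ((hcont 0 ⟨le_rfl, pi_pos⟩).continuousWithinAt (s := Ioi 0)).tendsto
  · have hsub : Tendsto (fun θ => π - θ) (𝓝[<] π) (𝓝[≠] 0) := by
      refine tendsto_nhdsWithin_of_tendsto_nhds_of_eventually_within _ ?_ ?_
      · simpa using ((continuous_sub_left π).tendsto π).mono_left nhdsWithin_le_nhds
      · filter_upwards [self_mem_nhdsWithin] with θ hθ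
        exact sub_ne_zero.2 (ne_of_gt hθ)
    exact (tendsto_sinRatioProd_nhdsNE ha.1.ne' hb.1.ne' m).comp hsub

end SinRatioProd

theorem stmt_7 (n : ℕ) (hn : 2 ≤ n) (φ : ℝ → ℝ)
    (hφ : ∀ θ, φ θ = (((n : ℝ) - 1) * π + θ) / n) (z : ℝ → ℝ)
    (hz : ∀ θ, z θ = (Real.sin θ) ^ n /
        ((Real.sin (φ θ - θ)) ^ (n - 1) * Real.sin (φ θ))) :
    StrictMonoOn z (Set.Ioo 0 π) ∧
    z '' Set.Ioo 0 π = Set.Ioo 0 ((n : ℝ) ^ n / ((n : ℝ) - 1) ^ (n - 1)) := by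
  obtain ⟨m, rfl⟩ : ∃ m, n = m + 1 := ⟨n - 1, by omega⟩
  have hm : (1 : ℝ) ≤ m := by exact_mod_cast (by omega : 1 ≤ m)
  set a : ℝ := m / (m + 1)
  set b : ℝ := 1 / (m + 1)
  have ha : a ∈ Ioo 0 1 := ⟨by positivity, (div_lt_one (by positivity)).2 (by linarith)⟩
  have hb : b ∈ Ioo 0 1 := ⟨by positivity, (div_lt_one (by positivity)).2 (by linarith)⟩
  have hzF : z = fun θ => sinRatioProd m a b (π - θ) := by
    funext θ
    have hφa : φ θ - θ = a * (π - θ) := by rw [hφ]; simp only [a]; push_cast; field_simp; ring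
    have hφb : φ θ = π - b * (π - θ) := by rw [hφ]; simp only [b]; push_cast; field_simp; ring
    rw [hz, hφa, hφb, sin_pi_sub, ← sin_pi_sub θ, Nat.add_sub_cancel, pow_succ]
    simp only [sinRatioProd, sinRatio, div_pow, div_mul_div_comm]
  have hM : a⁻¹ ^ m * b⁻¹ =
      ((m + 1 : ℕ) : ℝ) ^ (m + 1) / (((m + 1 : ℕ) : ℝ) - 1) ^ (m + 1 - 1) := by
    simp only [a, b, inv_div, div_one, div_pow, Nat.add_sub_cancel]
    push_cast
    rw [add_sub_cancel_right]
    ring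
  rw [hzF, ← hM]
  exact ⟨strictMonoOn_sinRatioProd_pi_sub ha hb m, image_sinRatioProd_pi_sub ha hb m⟩
end

section
/- Let n = 1, r ≥ 2, so φ(θ) = rθ. The function z(θ) = sin(θ) · sin^{r-1}((r-1)θ) / sin^r(rθ) is strictly increasing on (0, π/r) and maps (0, π/r) onto ((r-1)^{r-1}/r^r, ∞). -/
/-!
Write `s = sin θ`, `c = cos θ`, `S = sin (r-1)θ`, `C = cos (r-1)θ`, `T = sin rθ`. Since
`rθ = θ + (r-1)θ`, the quotient rule gives
`z' = S^(r-2) ((c S - (r-1) s C)² + r² (s S)²) / T^(r+1)`,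
which is positive on `(0, π/r)`, where all three sines are positive. Writing `sin x = x sinc x`,
the powers of `θ` cancel and `z → (r-1)^(r-1) / r^r` as `θ → 0⁺`; as `θ → π/r⁻` the numerator
stays positive while `T → 0⁺`, so `z → ∞`. A continuous strictly increasing function with these
end behaviours maps the interval onto `((r-1)^(r-1)/r^r, ∞)`.
-/

open Real Filter Set Topology

theorem image_Ioo_eq_Ioi_of_tendsto {α δ : Type*} [ConditionallyCompleteLinearOrder α]
    [TopologicalSpace α] [OrderTopology α] [DenselyOrdered α] [LinearOrder δ]
    [TopologicalSpace δ] [OrderClosedTopology δ] {f : α → δ} {a b : α} {L : δ} (hab : a < b)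
    (hf : ContinuousOn f (Ioo a b)) (hmono : StrictMonoOn f (Ioo a b))
    (ha : Tendsto f (𝓝[>] a) (𝓝 L)) (hb : Tendsto f (𝓝[<] b) atTop) :
    f '' Ioo a b = Ioi L := by
  have : (𝓝[>] a).NeBot := nhdsGT_neBot_of_exists_gt ⟨b, hab⟩
  have : (𝓝[<] b).NeBot := nhdsLT_neBot_of_exists_lt ⟨a, hab⟩
  apply Subset.antisymm
  · rintro _ ⟨x, hx, rfl⟩
    obtain ⟨c, hac, hcx⟩ := exists_between hx.1
    have hc : c ∈ Ioo a b := ⟨hac, hcx.trans hx.2⟩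
    have hLc : L ≤ f c := by
      refine le_of_tendsto ha ?_
      filter_upwards [Ioo_mem_nhdsGT hac] with t ht
      exact (hmono ⟨ht.1, ht.2.trans hc.2⟩ hc ht.2).le
    exact hLc.trans_lt (hmono hc hx hcx)
  · intro y hy
    obtain ⟨t₁, hft₁, ht₁⟩ := ((ha.eventually_lt_const hy).and (Ioo_mem_nhdsGT hab)).exists
    obtain ⟨t₂, hft₂, ht₂⟩ := ((hb.eventually_ge_atTop y).and (Ioo_mem_nhdsLT hab)).exists
    exact hf.surjOn_Icc ht₁ ht₂ ⟨hft₁.le, hft₂⟩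

theorem sin_mul_pos_of_mem_Ioo {a b θ : ℝ} (ha : 0 < a) (hab : a ≤ b)
    (hθ : θ ∈ Ioo 0 (π / b)) : 0 < sin (a * θ) := by
  have hb : 0 < b := ha.trans_le hab
  refine sin_pos_of_pos_of_lt_pi (mul_pos ha hθ.1) ?_
  have := (lt_div_iff₀ hb).1 hθ.2
  nlinarith [hθ.1]

theorem sin_eq_mul_sinc (x : ℝ) : sin x = x * sinc x := by
  rcases eq_or_ne x 0 with rfl | hx
  · simp
  · rw [sinc_of_ne_zero hx, mul_div_cancel₀ _ hx]

/-- With `r = m + 2` this is the function `z` of the theorem; the shift avoids truncated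
subtraction in `r - 1`. -/
noncomputable def sinPowRatio (m : ℕ) (θ : ℝ) : ℝ :=
  sin θ * sin ((m + 1) * θ) ^ (m + 1) / sin ((m + 2) * θ) ^ (m + 2)

theorem hasDerivAt_sinPowRatio (m : ℕ) {θ : ℝ} (hθ : sin ((m + 2) * θ) ≠ 0) :
    HasDerivAt (sinPowRatio m)
      (sin ((m + 1) * θ) ^ m *
        ((cos θ * sin ((m + 1) * θ) - (m + 1) * sin θ * cos ((m + 1) * θ)) ^ 2 +
          ((m + 2) * sin θ * sin ((m + 1) * θ)) ^ 2) / sin ((m + 2) * θ) ^ (m + 3)) θ := by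
  have hsin (a : ℝ) : HasDerivAt (fun x => sin (a * x)) (cos (a * θ) * a) θ := by
    simpa using ((hasDerivAt_id θ).const_mul a).sin
  have hq := ((hasDerivAt_sin θ).mul ((hsin (m + 1)).pow (m + 1))).div
    ((hsin (m + 2)).pow (m + 2)) (pow_ne_zero _ hθ)
  refine hq.congr_deriv ?_
  have hs : sin ((m + 2) * θ) = sin θ * cos ((m + 1) * θ) + cos θ * sin ((m + 1) * θ) := by
    rw [← sin_add]; congr 1; ring
  have hc : cos ((m + 2) * θ) = cos θ * cos ((m + 1) * θ) - sin θ * sin ((m + 1) * θ) := by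
    rw [← cos_add]; congr 1; ring
  -- With `(m + 2) θ = θ + (m + 1) θ` expanded, this is a polynomial identity in the sines and
  -- cosines of `θ` and `(m + 1) θ`; `sin² + cos² = 1` is not needed.
  simp only [Pi.pow_apply, Pi.mul_apply, Nat.add_sub_cancel]
  rw [div_eq_div_iff (pow_ne_zero _ (pow_ne_zero _ hθ)) (pow_ne_zero _ hθ), hc]
  rw [show m + 3 = (m + 1) + 2 by ring, pow_add _ (m + 1) 2, hs]
  push_cast
  ring

theorem continuousOn_sinPowRatio (m : ℕ) :
    ContinuousOn (sinPowRatio m) (Ioo 0 (π / (m + 2))) := by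
  refine ContinuousOn.div (by fun_prop) (by fun_prop) fun θ hθ => ?_
  exact pow_ne_zero _ (sin_mul_pos_of_mem_Ioo (by positivity) le_rfl hθ).ne'

theorem strictMonoOn_sinPowRatio (m : ℕ) :
    StrictMonoOn (sinPowRatio m) (Ioo 0 (π / (m + 2))) := by
  refine strictMonoOn_of_deriv_pos (convex_Ioo _ _) (continuousOn_sinPowRatio m) fun θ hθ => ?_
  rw [interior_Ioo] at hθ
  have h₁ : 0 < sin θ := by simpa using sin_mul_pos_of_mem_Ioo one_pos (by linarith) hθ
  have h₂ := sin_mul_pos_of_mem_Ioo (a := m + 1) (by positivity) (by linarith) hθ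
  have h₃ := sin_mul_pos_of_mem_Ioo (a := m + 2) (by positivity) le_rfl hθ
  rw [(hasDerivAt_sinPowRatio m h₃.ne').deriv]
  positivity

theorem sinPowRatio_eq_sinc (m : ℕ) {θ : ℝ} (hθ : θ ≠ 0) :
    sinPowRatio m θ = sinc θ * ((m + 1) * sinc ((m + 1) * θ)) ^ (m + 1) /
      ((m + 2) * sinc ((m + 2) * θ)) ^ (m + 2) := by
  have hsinc : sinPowRatio m θ =
      θ ^ (m + 2) * (sinc θ * ((m + 1) * sinc ((m + 1) * θ)) ^ (m + 1)) /
        (θ ^ (m + 2) * ((m + 2) * sinc ((m + 2) * θ)) ^ (m + 2)) := by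
    rw [sinPowRatio, sin_eq_mul_sinc θ, sin_eq_mul_sinc ((m + 1) * θ),
      sin_eq_mul_sinc ((m + 2) * θ)]
    generalize (m : ℝ) + 1 = a, (m : ℝ) + 2 = b
    ring
  rw [hsinc, mul_div_mul_left _ _ (pow_ne_zero _ hθ)]

theorem tendsto_sinPowRatio_nhdsGT_zero (m : ℕ) :
    Tendsto (sinPowRatio m) (𝓝[>] 0) (𝓝 ((m + 1) ^ (m + 1) / (m + 2) ^ (m + 2))) := by
  have hcont : ContinuousAt (fun θ : ℝ => sinc θ * ((m + 1) * sinc ((m + 1) * θ)) ^ (m + 1) /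
      ((m + 2) * sinc ((m + 2) * θ)) ^ (m + 2)) 0 :=
    ContinuousAt.div (by fun_prop) (by fun_prop) (by simp; positivity)
  have := hcont.tendsto.mono_left (nhdsWithin_le_nhds (s := Ioi 0))
  simp only [mul_zero, sinc_zero, mul_one, one_mul] at this
  refine this.congr' ?_
  filter_upwards [self_mem_nhdsWithin] with θ hθ
  exact (sinPowRatio_eq_sinc m (ne_of_gt hθ)).symm

theorem tendsto_sinPowRatio_nhdsLT (m : ℕ) :
    Tendsto (sinPowRatio m) (𝓝[<] (π / (m + 2))) atTop := by
  set b : ℝ := π / (m + 2)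
  have hb : 0 < b := by positivity
  have hb' : b ∈ Ioo 0 (π / (m + 1)) :=
    ⟨hb, div_lt_div_of_pos_left pi_pos (by positivity) (by linarith)⟩
  have hnum : 0 < sin b * sin ((m + 1) * b) ^ (m + 1) := by
    have h₁ : 0 < sin b := by simpa using sin_mul_pos_of_mem_Ioo one_pos (by linarith) hb'
    have h₂ := sin_mul_pos_of_mem_Ioo (a := m + 1) (by positivity) le_rfl hb'
    positivity
  have hden : Tendsto (fun θ : ℝ => sin ((m + 2) * θ) ^ (m + 2)) (𝓝[<] b) (𝓝[>] 0) := by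
    refine tendsto_nhdsWithin_iff.2 ⟨?_, ?_⟩
    · have hzero : sin ((m + 2) * b) ^ (m + 2) = 0 := by
        rw [mul_div_cancel₀ _ (by positivity), sin_pi, zero_pow (by omega)]
      simpa only [hzero] using
        ((by fun_prop : Continuous fun θ : ℝ => sin ((m + 2) * θ) ^ (m + 2)).tendsto b).mono_left
          nhdsWithin_le_nhds
    · filter_upwards [Ioo_mem_nhdsLT hb] with θ hθ
      exact pow_pos (sin_mul_pos_of_mem_Ioo (by positivity) le_rfl hθ) _
  have hnum_lim :=
    ((by fun_prop : Continuous fun θ : ℝ => sin θ * sin ((m + 1) * θ) ^ (m + 1)).tendsto b).mono_left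
      (nhdsWithin_le_nhds (s := Iio b))
  exact (hnum_lim.pos_mul_atTop hnum hden.inv_tendsto_nhdsGT_zero).congr fun θ =>
    (div_eq_mul_inv _ _).symm

theorem stmt_8 (r : ℕ) (hr : 2 ≤ r) (z : ℝ → ℝ)
    (hz : ∀ θ, z θ = Real.sin θ * (Real.sin (((r : ℝ) - 1) * θ)) ^ (r - 1) /
        (Real.sin (r * θ)) ^ r) :
    StrictMonoOn z (Set.Ioo 0 (π / r)) ∧
    z '' Set.Ioo 0 (π / r) = Set.Ioi (((r : ℝ) - 1) ^ (r - 1) / (r : ℝ) ^ r) := by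
  obtain ⟨m, rfl⟩ : ∃ m, r = m + 2 := ⟨r - 2, by omega⟩
  have hsub : m + 2 - 1 = m + 1 := rfl
  have hcast : ((m + 2 : ℕ) : ℝ) - 1 = m + 1 := by push_cast; ring
  obtain rfl : z = sinPowRatio m := funext fun θ => by
    rw [hz, sinPowRatio, hsub, hcast]; push_cast; rfl
  rw [hsub, hcast]
  push_cast
  exact ⟨strictMonoOn_sinPowRatio m, image_Ioo_eq_Ioi_of_tendsto (by positivity)
    (continuousOn_sinPowRatio m) (strictMonoOn_sinPowRatio m)
    (tendsto_sinPowRatio_nhdsGT_zero m) (tendsto_sinPowRatio_nhdsLT m)⟩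
end

section
/- Let n, r ∈ ℕ with max{n,r} > 1, θ ∈ (0, π/r), and φ = ((n-1)π + rθ)/n. If z = (sin^n θ)/(sin^{n-r}(φ-θ) · sin^r φ) and t = (sin φ / sin(φ-θ)) e^{-iθ}, then (1-t)^n + z t^r = 0; moreover (1-t)^n = -(sin^n θ) e^{-irθ} / sin^n(φ-θ). -/
open Real Complex

/-! Expanding `sin (φ - θ)` gives `sin (φ - θ) - sin φ · e^{-iθ} = -sin θ · e^{-iφ}`, i.e.
`1 - t = sin θ · (-e^{-iφ}) / sin (φ - θ)`. Since `n φ = (n - 1) π + r θ`, the n-th power of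
`-e^{-iφ}` is `-e^{-irθ}`, while `z t^r = sin^n θ · e^{-irθ} / sin^n (φ - θ)` by direct
computation.
The constraints on `n, r, θ` put `φ - θ` and `φ` in `(0, π)`, so the sines in the denominators
are positive. -/
theorem one_sub_sin_div_sin_sub_mul_exp {θ φ : ℝ} (h : Real.sin (φ - θ) ≠ 0) :
    1 - ((Real.sin φ / Real.sin (φ - θ) : ℝ) : ℂ) * cexp (-θ * I) =
      (Real.sin θ : ℂ) * -cexp (-φ * I) / (Real.sin (φ - θ) : ℂ) := by
  have h' : (Real.sin (φ - θ) : ℂ) ≠ 0 := by exact_mod_cast h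
  rw [eq_div_iff h', sub_mul, one_mul, ofReal_div, div_mul_eq_mul_div, div_mul_cancel₀ _ h',
    ← ofReal_neg, ← ofReal_neg, exp_mul_I, exp_mul_I]
  simp only [← ofReal_cos, ← ofReal_sin, Real.cos_neg, Real.sin_neg, Real.sin_sub]
  push_cast
  ring

theorem neg_exp_neg_mul_I_pow (x : ℂ) (n : ℕ) :
    (-cexp (-x * I)) ^ n = -cexp (-(n * x - (n - 1) * π) * I) := by
  have neg_exp (z : ℂ) : -cexp z = cexp (z + π * I) := by
    rw [Complex.exp_add, exp_pi_mul_I]; ring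
  rw [neg_exp, neg_exp, ← Complex.exp_nat_mul]
  ring_nf

theorem ofReal_div_zpow_mul_mul_pow {a b c x : ℝ} {n r : ℕ} (hb : b ≠ 0) (hc : c ≠ 0) :
    ((a ^ n / (b ^ ((n : ℤ) - r) * c ^ r) : ℝ) : ℂ) *
        (((c / b : ℝ) : ℂ) * cexp (-x * I)) ^ r =
      (a : ℂ) ^ n * cexp (-(r : ℂ) * x * I) / (b : ℂ) ^ n := by
  have hb' : (b : ℂ) ≠ 0 := by exact_mod_cast hb
  have hc' : (c : ℂ) ≠ 0 := by exact_mod_cast hc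
  rw [mul_pow, ← Complex.exp_nat_mul, ofReal_div c b, div_pow]
  push_cast
  rw [zpow_sub₀ hb', zpow_natCast, zpow_natCast]
  field_simp

theorem lt_pi_of_mul_eq_pred_mul_pi_add {n r : ℕ} {θ φ : ℝ} (hn : 0 < n) (hrθ : r * θ < π)
    (hφ : n * φ = (n - 1) * π + r * θ) : φ < π := by
  have hn' : (0 : ℝ) < n := by exact_mod_cast hn
  nlinarith

theorem lt_of_mul_eq_pred_mul_pi_add {n r : ℕ} {θ φ : ℝ} (hn : 0 < n) (hr : 0 < r)
    (hmax : 1 < max n r) (hθ0 : 0 < θ) (hθπ : θ < π) (hφ : n * φ = (n - 1) * π + r * θ) :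
    θ < φ := by
  have hn1 : (1 : ℝ) ≤ n := by exact_mod_cast hn
  have hr1 : (1 : ℝ) ≤ r := by exact_mod_cast hr
  have key : 0 < (n : ℝ) * (φ - θ) := by
    rw [show (n : ℝ) * (φ - θ) = ((n : ℝ) - 1) * (π - θ) + ((r : ℝ) - 1) * θ by
      linear_combination hφ]
    rcases lt_max_iff.mp hmax with h | h
    · have h' : (1 : ℝ) < n := by exact_mod_cast h
      nlinarith
    · have h' : (1 : ℝ) < r := by exact_mod_cast h
      nlinarith
  linarith [pos_of_mul_pos_right key (by linarith)]

theorem stmt_9 (n r : ℕ) (hn : 0 < n) (hr : 0 < r) (hmax : 1 < max n r)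
    (θ : ℝ) (hθ : θ ∈ Set.Ioo 0 (π / r)) (φ : ℝ)
    (hφ : φ = (((n : ℝ) - 1) * π + r * θ) / n) (z : ℝ)
    (hz : z = (Real.sin θ) ^ n /
        ((Real.sin (φ - θ)) ^ ((n : ℤ) - (r : ℤ)) * (Real.sin φ) ^ r))
    (t : ℂ)
    (ht : t = ((Real.sin φ / Real.sin (φ - θ) : ℝ) : ℂ) * Complex.exp (-θ * Complex.I)) :
    (1 - t) ^ n + (z : ℂ) * t ^ r = 0 ∧
    (1 - t) ^ n = -((Real.sin θ : ℂ) ^ n * Complex.exp (-(r : ℂ) * θ * Complex.I) /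
        (Real.sin (φ - θ) : ℂ) ^ n) := by
  obtain ⟨hθ0, hθr⟩ := hθ
  have hrθ : r * θ < π := by rwa [lt_div_iff₀' (by exact_mod_cast hr)] at hθr
  have hθπ : θ < π := (le_mul_of_one_le_left hθ0.le (by exact_mod_cast hr)).trans_lt hrθ
  have hnφ : n * φ = (n - 1) * π + r * θ := by
    rw [hφ, mul_div_cancel₀ _ (by exact_mod_cast hn.ne')]
  have hθφ := lt_of_mul_eq_pred_mul_pi_add hn hr hmax hθ0 hθπ hnφ
  have hφπ := lt_pi_of_mul_eq_pred_mul_pi_add hn hrθ hnφ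
  have hb : Real.sin (φ - θ) ≠ 0 := (sin_pos_of_pos_of_lt_pi (by linarith) (by linarith)).ne'
  have hc : Real.sin φ ≠ 0 := (sin_pos_of_pos_of_lt_pi (by linarith) hφπ).ne'
  have hpow : (1 - t) ^ n = -((Real.sin θ : ℂ) ^ n * cexp (-(r : ℂ) * θ * I) /
      (Real.sin (φ - θ) : ℂ) ^ n) := by
    have harg : (n * φ - (n - 1) * π : ℂ) = r * θ := by exact_mod_cast sub_eq_of_eq_add' hnφ
    rw [ht, one_sub_sin_div_sin_sub_mul_exp hb, div_pow, mul_pow, neg_exp_neg_mul_I_pow, harg]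
    ring_nf
  refine ⟨?_, hpow⟩
  rw [hpow, hz, ht, ofReal_div_zpow_mul_mul_pow hb hc]
  ring
end

section
/- Let n, r ∈ ℕ with max{n,r} > 1, θ ∈ (0, π/r), and φ = ((n-1)π + rθ)/n. The complex numbers ζ = e^{iθ} and ζ = e^{-iθ} are roots of the polynomial Q(ζ) = (sin(φ-θ)/sin θ − ζ · sin φ/sin θ)^n + ζ^r. -/
/-!
With `ζ = e^{iθ}`, the identity `sin(φ - θ) - e^{iθ} sin φ = -e^{iφ} sin θ` collapses the bracket
of `Q` to `-e^{iφ}`, and `nφ = (n - 1)π + rθ` turns `(-e^{iφ})^n` into `-e^{irθ} = -ζ^r`.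
Since `Q` has real coefficients, its value at `e^{-iθ}` is the conjugate of its value at `e^{iθ}`.
-/

open Real Complex

lemma sin_sub_div_sin_sub_exp_mul_sin_div_sin {θ : ℝ} (hθ : Real.sin θ ≠ 0) (φ : ℝ) :
    ((Real.sin (φ - θ) / Real.sin θ : ℝ) : ℂ)
      - exp (θ * I) * ((Real.sin φ / Real.sin θ : ℝ) : ℂ) = -exp (φ * I) := by
  have hθ' : Complex.sin θ ≠ 0 := by exact_mod_cast hθ
  push_cast
  rw [Complex.exp_mul_I, Complex.exp_mul_I, Complex.sin_sub]
  field_simp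
  ring

lemma neg_exp_pow_add_exp_pow_eq_zero {n r : ℕ} {θ φ : ℝ}
    (hφ : n * φ = ((n : ℝ) - 1) * π + r * θ) :
    (-exp (φ * I)) ^ n + exp (θ * I) ^ r = 0 := by
  have hφ' : (n : ℂ) * φ = ((n : ℂ) - 1) * π + r * θ := by exact_mod_cast hφ
  have hexp : exp (φ * I) ^ n = exp (π * I) ^ n * exp (-(π * I)) * exp (θ * I) ^ r := by
    rw [← Complex.exp_nat_mul, ← Complex.exp_nat_mul, ← Complex.exp_nat_mul,
      ← Complex.exp_add, ← Complex.exp_add]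
    congr 1
    linear_combination I * hφ'
  rw [neg_pow, hexp, Complex.exp_neg, Complex.exp_pi_mul_I, ← mul_assoc, ← mul_assoc, ← mul_pow]
  norm_num

lemma conj_sub_mul_pow_add_pow (a b : ℝ) (n r : ℕ) (z : ℂ) :
    ((a : ℂ) - (starRingEnd ℂ) z * b) ^ n + (starRingEnd ℂ) z ^ r
      = (starRingEnd ℂ) (((a : ℂ) - z * b) ^ n + z ^ r) := by
  simp only [map_add, map_pow, map_sub, map_mul, Complex.conj_ofReal]

theorem stmt_10_general (n r : ℕ) (hn : 0 < n) (hr : 0 < r)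
    (θ : ℝ) (hθ : θ ∈ Set.Ioo 0 (π / r)) (φ : ℝ)
    (hφ : φ = (((n : ℝ) - 1) * π + r * θ) / n) (Q : ℂ → ℂ)
    (hQ : ∀ ζ, Q ζ = (((Real.sin (φ - θ) / Real.sin θ : ℝ) : ℂ)
        - ζ * ((Real.sin φ / Real.sin θ : ℝ) : ℂ)) ^ n + ζ ^ r) :
    Q (Complex.exp (θ * Complex.I)) = 0 ∧ Q (Complex.exp (-θ * Complex.I)) = 0 := by
  obtain ⟨hθ₀, hθr⟩ := hθ
  have hθπ : θ < π := hθr.trans_le (div_le_self pi_pos.le (by exact_mod_cast hr))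
  have hsin : Real.sin θ ≠ 0 := (sin_pos_of_pos_of_lt_pi hθ₀ hθπ).ne'
  have hnφ : n * φ = ((n : ℝ) - 1) * π + r * θ := by
    rw [hφ, mul_div_cancel₀ _ (by exact_mod_cast hn.ne')]
  have hroot : Q (exp (θ * I)) = 0 := by
    rw [hQ, sin_sub_div_sin_sub_exp_mul_sin_div_sin hsin]
    exact neg_exp_pow_add_exp_pow_eq_zero hnφ
  have hconj : exp (-θ * I) = (starRingEnd ℂ) (exp (θ * I)) := by
    rw [← Complex.exp_conj, map_mul, Complex.conj_ofReal, Complex.conj_I, neg_mul, mul_neg]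
  refine ⟨hroot, ?_⟩
  rw [hconj, hQ, conj_sub_mul_pow_add_pow, ← hQ, hroot, map_zero]

theorem stmt_10 (n r : ℕ) (hn : 0 < n) (hr : 0 < r) (hmax : 1 < max n r)
    (θ : ℝ) (hθ : θ ∈ Set.Ioo 0 (π / r)) (φ : ℝ)
    (hφ : φ = (((n : ℝ) - 1) * π + r * θ) / n) (Q : ℂ → ℂ)
    (hQ : ∀ ζ, Q ζ = (((Real.sin (φ - θ) / Real.sin θ : ℝ) : ℂ)
        - ζ * ((Real.sin φ / Real.sin θ : ℝ) : ℂ)) ^ n + ζ ^ r) :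
    Q (Complex.exp (θ * Complex.I)) = 0 ∧ Q (Complex.exp (-θ * Complex.I)) = 0 :=
  stmt_10_general n r hn hr θ hθ φ hφ Q hQ
end

section
/- Let n, r ∈ ℕ with max{n,r} > 1, θ ∈ (0, π/r), and φ = ((n-1)π + rθ)/n. The polynomial Q(ζ) = (sin(φ-θ)/sin θ − ζ sin φ/sin θ)^n + ζ^r has exactly two zeros on the unit circle |ζ| = 1 (namely e^{iθ} and e^{-iθ}), and all its other zeros ζ satisfy |ζ| > 1. -/
/-!
Write `ψ = π - φ`, so that `n ψ + r θ = π`, and `a = sin (θ + ψ) / sin θ`, `b = sin ψ / sin θ`,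
so that `Q ζ = (a - b ζ) ^ n + ζ ^ r`. By the law of sines, `a`, `b`, `1` are the sides of a
triangle with angles `θ` (opposite `1`) and `ψ` (opposite `b`) at the side `a`; this gives
`a - b e^{iθ} = e^{-iψ}`, hence `Q (e^{± iθ}) = 0`.

Conversely, let `ξ` be a zero with `Im ξ ≥ 0` and `|ξ| = σ ^ n ≤ 1`. Then `|a - b ξ| = σ ^ r`, so
`0`, `a`, `b ξ` span a triangle with sides `a`, `b σ ^ n`, `σ ^ r`, whose angles `A`, `B` at the
side `a` satisfy `cos (n A + r B) = -1` by comparing arguments in `(a - b ξ) ^ n = -ξ ^ r`. Along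
`σ ∈ (0, 1]` the triangle inequalities hold strictly (a trigonometric inequality, proved by
concavity of `sin` and Bernoulli's inequality), and `n A + r B` is strictly increasing in `σ`: its
derivative is a positive multiple of `|n b σ ^ n - r σ ^ r e^{iC}| ^ 2`, `C` the third angle. Since
it equals `n ψ + r θ = π` at `σ = 1`, `cos (n A + r B) = -1` forces `σ = 1` and then `ξ = e^{iθ}`.
-/

open Real Complex Set ComplexConjugate

theorem mul_sin_mul_lt {k m θ : ℝ} (hk : 0 < k) (hkm : k < m) (hθ : 0 < θ) (hmθ : m * θ ≤ π) :
    k * Real.sin (m * θ) < m * Real.sin (k * θ) := by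
  have hm : 0 < m := hk.trans hkm
  have h := strictConcaveOn_sin_Icc.2 (left_mem_Icc.2 pi_pos.le) ⟨by positivity, hmθ⟩
    (by positivity : (0 : ℝ) ≠ m * θ) (sub_pos.2 ((div_lt_one hm).2 hkm)) (div_pos hk hm)
    (sub_add_cancel 1 (k / m))
  simp only [smul_eq_mul, Real.sin_zero, mul_zero, zero_add] at h
  rwa [show k / m * (m * θ) = k * θ by field_simp, div_mul_eq_mul_div, div_lt_iff₀' hm] at h

theorem sin_mul_mul_lt {r : ℕ} {θ σ : ℝ} (hr : 2 ≤ r) (hθ : 0 < θ) (hrθ : r * θ < π)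
    (hσ : 0 < σ) :
    Real.sin (r * θ) * σ < Real.sin (r * θ - θ) + Real.sin θ * σ ^ r := by
  have hr' : (2 : ℝ) ≤ r := by exact_mod_cast hr
  have hsin : 0 < Real.sin (r * θ) := sin_pos_of_pos_of_lt_pi (by positivity) hrθ
  have h₁ := mul_sin_mul_lt one_pos (by linarith) hθ hrθ.le
  have h₂ := mul_sin_mul_lt (k := r - 1) (by linarith) (by linarith) hθ hrθ.le
  rw [one_mul, one_mul] at h₁
  simp only [sub_one_mul] at h₂
  have hbernoulli : 1 + r * (σ - 1) ≤ σ ^ r := one_add_mul_sub_le_pow (by linarith) r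
  have hσr : 0 < σ ^ r := by positivity
  nlinarith [mul_lt_mul_of_pos_right h₁ hσr, mul_le_mul_of_nonneg_left hbernoulli hsin.le]

theorem sin_le_sin_add {θ ψ : ℝ} (hθ : 0 < θ) (hψ : 0 < ψ) (h : θ + 2 * ψ ≤ π) :
    Real.sin ψ ≤ Real.sin (θ + ψ) := by
  have h₀ := Real.sin_sub_sin (θ + ψ) ψ
  rw [show (θ + ψ - ψ) / 2 = θ / 2 by ring, show (θ + ψ + ψ) / 2 = (θ + 2 * ψ) / 2 by ring] at h₀
  have h₁ : 0 ≤ Real.sin (θ / 2) := sin_nonneg_of_nonneg_of_le_pi (by linarith) (by linarith)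
  have h₂ : 0 ≤ Real.cos ((θ + 2 * ψ) / 2) := cos_nonneg_of_mem_Icc ⟨by linarith, by linarith⟩
  nlinarith [mul_nonneg h₁ h₂]

-- Divided by `sin θ`, this is the strict triangle inequality `b σ ^ n < a + σ ^ r`.
theorem sin_mul_pow_lt {n r : ℕ} {θ ψ σ : ℝ} (hn : 0 < n) (hr : 0 < r) (hnr : 1 < max n r)
    (hθ : 0 < θ) (hψ : 0 < ψ) (hsum : n * ψ + r * θ = π) (hσ₀ : 0 < σ) (hσ₁ : σ ≤ 1) :
    Real.sin ψ * σ ^ n < Real.sin (θ + ψ) + Real.sin θ * σ ^ r := by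
  have hn' : (1 : ℝ) ≤ n := by exact_mod_cast hn
  have hr' : (1 : ℝ) ≤ r := by exact_mod_cast hr
  have hθσ : 0 < Real.sin θ * σ ^ r :=
    mul_pos (sin_pos_of_pos_of_lt_pi hθ (by nlinarith)) (by positivity)
  by_cases hc : θ + 2 * ψ ≤ π
  · have : Real.sin ψ * σ ^ n ≤ Real.sin ψ := mul_le_of_le_one_right
      (sin_pos_of_pos_of_lt_pi hψ (by nlinarith)).le (pow_le_one₀ hσ₀.le hσ₁)
    linarith [sin_le_sin_add hθ hψ hc]
  · obtain rfl : n = 1 := by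
      by_contra h
      have : (2 : ℝ) ≤ n := by exact_mod_cast (by omega : 2 ≤ n)
      nlinarith
    have hψ' : ψ = π - r * θ := by push_cast at hsum; linarith
    have h := sin_mul_mul_lt (r := r) (by omega) hθ (by linarith) hσ₀
    rwa [hψ', show θ + (π - r * θ) = π - (r * θ - θ) by ring, Real.sin_pi_sub, Real.sin_pi_sub,
      pow_one]

/-- The angle between the sides `a` and `q` of a triangle with sides `a`, `p`, `q`, i.e. the angle
opposite to `p`, by the law of cosines. -/
noncomputable def triangleAngle (a p q : ℝ) : ℝ :=
  arccos ((a ^ 2 + q ^ 2 - p ^ 2) / (2 * a * q))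

/-- Four times the area of a triangle with sides `a`, `p`, `q` (Heron's formula). -/
noncomputable def heron (a p q : ℝ) : ℝ :=
  √((a + p + q) * (-a + p + q) * (a - p + q) * (a + p - q))

theorem heron_pos {a p q : ℝ} (h₁ : a < p + q) (h₂ : p < a + q) (h₃ : q < a + p) :
    0 < heron a p q :=
  Real.sqrt_pos.2 (mul_pos (mul_pos (mul_pos (by linarith) (by linarith)) (by linarith))
    (by linarith))

theorem arg_eq_triangleAngle {a : ℝ} (ha : 0 < a) {z : ℂ} (hz : z ≠ 0) (him : 0 ≤ z.im) :
    arg z = triangleAngle a ‖(a : ℂ) - z‖ ‖z‖ := by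
  have hz' : 0 < ‖z‖ := norm_pos_iff.2 hz
  have hcos : (a ^ 2 + ‖z‖ ^ 2 - ‖(a : ℂ) - z‖ ^ 2) / (2 * a * ‖z‖) = Real.cos (arg z) := by
    rw [cos_arg hz, Complex.sq_norm, Complex.sq_norm, normSq_apply, normSq_apply]
    simp only [sub_re, sub_im, ofReal_re, ofReal_im]
    field_simp
    ring
  rw [triangleAngle, hcos, arccos_cos (arg_nonneg_iff.2 him) (arg_le_pi z)]

theorem hasDerivAt_triangleAngle {a p' q' x : ℝ} {p q : ℝ → ℝ} (ha : 0 < a)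
    (hp : HasDerivAt p p' x) (hq : HasDerivAt q q' x)
    (h₁ : a < p x + q x) (h₂ : p x < a + q x) (h₃ : q x < a + p x) :
    HasDerivAt (fun t ↦ triangleAngle a (p t) (q t))
      ((2 * p x * q x * p' - (p x ^ 2 + q x ^ 2 - a ^ 2) * q') / (q x * heron a (p x) (q x)))
      x := by
  have hP : 0 < p x := by linarith
  have hQ : 0 < q x := by linarith
  have hH := heron_pos h₁ h₂ h₃
  set u := (a ^ 2 + q x ^ 2 - p x ^ 2) / (2 * a * q x) with hu
  have hu₁ : u < 1 := by
    rw [hu, div_lt_one (by positivity)]; nlinarith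
  have hu₂ : -1 < u := by
    rw [hu, lt_div_iff₀ (by positivity)]; nlinarith
  -- `√(1 - u ^ 2)` is the sine of the angle
  have hsin : √(1 - u ^ 2) = heron a (p x) (q x) / (2 * a * q x) := by
    rw [heron, ← Real.sqrt_sq (by positivity : 0 ≤ 2 * a * q x), ← Real.sqrt_div' _ (by positivity)]
    congr 1
    rw [hu]; field_simp; ring
  have hu' := (((hq.pow 2).const_add (a ^ 2)).sub (hp.pow 2)).div (hq.const_mul (2 * a))
    (by positivity : 2 * a * q x ≠ 0)
  refine ((hasDerivAt_arccos hu₂.ne' hu₁.ne).comp x hu').congr_deriv ?_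
  rw [hsin]
  simp only [Pi.sub_apply, Pi.pow_apply, Nat.cast_ofNat, Nat.add_one_sub_one, pow_one]
  field_simp
  ring

theorem hasDerivAt_pow_of_ne_zero (n : ℕ) {t : ℝ} (ht : t ≠ 0) :
    HasDerivAt (fun x ↦ x ^ n) (n * t ^ n / t) t := by
  refine (hasDerivAt_pow n t).congr_deriv ?_
  cases n with
  | zero => simp
  | succ n => rw [pow_succ, Nat.add_sub_cancel]; field_simp

/-- `n A + r B`, where `A` and `B` are the angles of the triangle with sides `a`, `b σ ^ n`, `σ ^ r`
opposite to `b σ ^ n` and to `σ ^ r`. -/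
noncomputable def angleSum (n r : ℕ) (a b σ : ℝ) : ℝ :=
  n * triangleAngle a (b * σ ^ n) (σ ^ r) + r * triangleAngle a (σ ^ r) (b * σ ^ n)

theorem angleSum_strictMonoOn {n r : ℕ} {a b σ₀ σ₁ : ℝ} (hn : 0 < n) (hr : 0 < r) (ha : 0 < a)
    (hb : 0 < b) (hσ₀ : 0 < σ₀) (htri : ∀ t ∈ Ioo σ₀ σ₁,
      a < b * t ^ n + t ^ r ∧ b * t ^ n < a + t ^ r ∧ t ^ r < a + b * t ^ n) :
    StrictMonoOn (angleSum n r a b) (Icc σ₀ σ₁) := by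
  apply strictMonoOn_of_deriv_pos (convex_Icc _ _)
  · refine ContinuousOn.add (continuousOn_const.mul ?_) (continuousOn_const.mul ?_) <;>
    refine continuous_arccos.comp_continuousOn
      (ContinuousOn.div (by fun_prop) (by fun_prop) fun t ht ↦ ?_) <;>
    have := hσ₀.trans_le ht.1 <;> positivity
  intro t ht
  rw [interior_Icc] at ht
  obtain ⟨h₁, h₂, h₃⟩ := htri t ht
  have ht₀ : 0 < t := hσ₀.trans ht.1
  have hq := hasDerivAt_pow_of_ne_zero r ht₀.ne'
  have hp := (hasDerivAt_pow_of_ne_zero n ht₀.ne').const_mul b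
  have hG : HasDerivAt (angleSum n r a b) _ t :=
    ((hasDerivAt_triangleAngle ha hp hq h₁ h₂ h₃).const_mul (n : ℝ)).add
      ((hasDerivAt_triangleAngle ha hq hp (by linarith) h₃ h₂).const_mul (r : ℝ))
  rw [hG.deriv]
  set p := b * t ^ n
  set q := t ^ r
  have hp₀ : 0 < p := by positivity
  have hq₀ : 0 < q := by positivity
  have hH := heron_pos h₁ h₂ h₃
  have hHcomm : heron a q p = heron a p q := by unfold heron; ring_nf
  -- with `p ^ 2 + q ^ 2 - a ^ 2 = 2 p q cos C`, this is `|n p - r q e^{iC}| ^ 2`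
  have hK : 0 < n ^ 2 * p ^ 2 + r ^ 2 * q ^ 2 - n * r * (p ^ 2 + q ^ 2 - a ^ 2) := by
    have := mul_pos (by positivity : (0 : ℝ) < n * r)
      (mul_pos (by linarith : 0 < a - p + q) (by linarith : 0 < a + p - q))
    nlinarith [sq_nonneg (n * p - r * q)]
  rw [hHcomm, show b * (n * t ^ n / t) = n * p / t by ring]
  refine (div_pos (mul_pos two_pos hK) (mul_pos ht₀ hH)).trans_eq ?_
  field_simp
  ring

theorem cos_add_arg_eq_neg_one {z w : ℂ} (hz : z ≠ 0) (hw : w ≠ 0) (n r : ℕ) {c : ℝ}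
    (hc : 0 < c) (h : z ^ n * w ^ r = -c) : Real.cos (n * arg z + r * arg w) = -1 := by
  have hpolar : z ^ n * w ^ r =
      ((‖z‖ ^ n * ‖w‖ ^ r : ℝ) : ℂ) * exp ((n * arg z + r * arg w : ℝ) * I) := by
    conv_lhs => rw [← norm_mul_exp_arg_mul_I z, ← norm_mul_exp_arg_mul_I w]
    push_cast
    rw [mul_pow, mul_pow, ← Complex.exp_nat_mul, ← Complex.exp_nat_mul, add_mul, Complex.exp_add]
    ring_nf
  rw [h] at hpolar
  have hm : ‖z‖ ^ n * ‖w‖ ^ r = c := by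
    have := congrArg norm hpolar
    rwa [norm_mul, norm_exp_ofReal_mul_I, mul_one, norm_neg, norm_real, norm_real,
      norm_of_nonneg hc.le, norm_of_nonneg (by positivity), eq_comm] at this
  have hre := congrArg re hpolar
  rw [re_ofReal_mul, exp_ofReal_mul_I_re, hm] at hre
  simp only [neg_re, ofReal_re] at hre
  nlinarith

noncomputable def trinomial (n r : ℕ) (a b : ℝ) (ζ : ℂ) : ℂ := ((a : ℂ) - ζ * b) ^ n + ζ ^ r

theorem trinomial_conj (n r : ℕ) (a b : ℝ) (ζ : ℂ) :
    trinomial n r a b (conj ζ) = conj (trinomial n r a b ζ) := by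
  simp [trinomial]

theorem eq_one_of_cos_angleSum_eq_neg_one {n r : ℕ} {a b σ : ℝ} (hn : 0 < n) (hr : 0 < r)
    (ha : 0 < a) (hb : 0 < b)
    (hside : ∀ t ∈ Ioc 0 1, b * t ^ n < a + t ^ r ∧ t ^ r < a + b * t ^ n)
    (hπ : angleSum n r a b 1 = π) (hσ₀ : 0 < σ) (hσ₁ : σ ≤ 1) (htri : a ≤ b * σ ^ n + σ ^ r)
    (hcos : Real.cos (angleSum n r a b σ) = -1) : σ = 1 := by
  by_contra hne
  have hlt : σ < 1 := lt_of_le_of_ne hσ₁ hne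
  have hmono := angleSum_strictMonoOn (σ₁ := 1) hn hr ha hb hσ₀ fun t ht ↦ by
    have h₁ : σ ^ n < t ^ n := pow_lt_pow_left₀ ht.1 hσ₀.le hn.ne'
    have h₂ : σ ^ r ≤ t ^ r := pow_le_pow_left₀ hσ₀.le ht.1.le r
    exact ⟨by nlinarith, hside t ⟨hσ₀.trans ht.1, ht.2.le⟩⟩
  have hlt' := hmono ⟨le_rfl, hσ₁⟩ ⟨hσ₁, le_rfl⟩ hlt
  rw [hπ] at hlt'
  have h₀ : 0 ≤ angleSum n r a b σ :=
    add_nonneg (mul_nonneg n.cast_nonneg (arccos_nonneg _))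
      (mul_nonneg r.cast_nonneg (arccos_nonneg _))
  have := strictAntiOn_cos ⟨h₀, hlt'.le⟩ ⟨pi_pos.le, le_rfl⟩ hlt'
  rw [Real.cos_pi, hcos] at this
  exact this.false

theorem eq_exp_of_trinomial_eq_zero {n r : ℕ} {a b : ℝ} (hn : 0 < n) (hr : 0 < r) (ha : 0 < a)
    (hb : 0 < b) (hside : ∀ σ ∈ Ioc 0 1, b * σ ^ n < a + σ ^ r ∧ σ ^ r < a + b * σ ^ n)
    (hπ : angleSum n r a b 1 = π) {ξ : ℂ} (hξ : trinomial n r a b ξ = 0) (him : 0 ≤ ξ.im)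
    (hnorm : ‖ξ‖ ≤ 1) : ξ = exp (triangleAngle a 1 b * I) := by
  have hξ₀ : ξ ≠ 0 := by
    rintro rfl
    simp [trinomial, hr.ne', ha.ne'] at hξ
  set w := (a : ℂ) - ξ * b with hw_def
  have hw : w ^ n = -ξ ^ r := eq_neg_of_add_eq_zero_left hξ
  obtain ⟨σ, hσ₀, hσ₁, hσn⟩ : ∃ σ : ℝ, 0 < σ ∧ σ ≤ 1 ∧ σ ^ n = ‖ξ‖ :=
    ⟨‖ξ‖ ^ (n⁻¹ : ℝ), by positivity, rpow_le_one (norm_nonneg _) hnorm (by positivity),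
      rpow_inv_natCast_pow (norm_nonneg _) hn.ne'⟩
  have hw_norm : ‖w‖ = σ ^ r := by
    have := congrArg norm hw
    rw [norm_pow, norm_neg, norm_pow, ← hσn, ← pow_mul, mul_comm, pow_mul] at this
    exact (pow_left_inj₀ (norm_nonneg _) (by positivity) hn.ne').1 this
  have hbξ_norm : ‖ξ * b‖ = b * σ ^ n := by
    rw [norm_mul, norm_real, norm_of_nonneg hb.le, hσn, mul_comm]
  have hw₀ : w ≠ 0 := by
    rw [← norm_ne_zero_iff, hw_norm]; positivity
  -- the triangle `0`, `a`, `b ξ`: its angle at `a` is `arg (conj w)`, its angle at `0` is `arg ξ`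
  have hA : arg (conj w) = triangleAngle a (b * σ ^ n) (σ ^ r) := by
    rw [arg_eq_triangleAngle ha ((map_ne_zero _).2 hw₀) (by simp [hw_def]; positivity),
      norm_conj, hw_norm, ← hbξ_norm, hw_def, map_sub, conj_ofReal, sub_sub_cancel, norm_conj]
  have hB : arg ξ = triangleAngle a (σ ^ r) (b * σ ^ n) := by
    rw [← arg_real_mul ξ hb,
      arg_eq_triangleAngle ha (mul_ne_zero (ofReal_ne_zero.2 hb.ne') hξ₀) (by simp; positivity),
      mul_comm, ← hw_def, hw_norm, hbξ_norm]
  have hcos : Real.cos (angleSum n r a b σ) = -1 := by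
    rw [angleSum, ← hA, ← hB]
    refine cos_add_arg_eq_neg_one ((map_ne_zero _).2 hw₀) hξ₀ n r
      (normSq_pos.2 (pow_ne_zero r hξ₀)) ?_
    rw [← map_pow, hw, map_neg, neg_mul, ← normSq_eq_conj_mul_self]
  have htri : a ≤ b * σ ^ n + σ ^ r := by
    have := norm_add_le (ξ * b) w
    rwa [hw_def, add_sub_cancel, norm_real, norm_of_nonneg ha.le, hbξ_norm, hw_norm] at this
  obtain rfl := eq_one_of_cos_angleSum_eq_neg_one hn hr ha hb hside hπ hσ₀ hσ₁ htri hcos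
  rw [← norm_mul_exp_arg_mul_I ξ, ← hσn, hB]
  simp

section SineTriangle

variable {n r : ℕ} {θ ψ : ℝ}

theorem sub_exp_mul_I_mul_eq (hθ : Real.sin θ ≠ 0) :
    ((Real.sin (θ + ψ) / Real.sin θ : ℝ) : ℂ) - exp (θ * I) * ((Real.sin ψ / Real.sin θ : ℝ) : ℂ) =
      exp ((-ψ : ℝ) * I) := by
  have hθ' : Complex.sin θ ≠ 0 := by exact_mod_cast hθ
  push_cast
  rw [exp_mul_I, exp_mul_I, Complex.sin_add, Complex.cos_neg, Complex.sin_neg]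
  field_simp
  ring

theorem trinomial_exp_mul_I_eq_zero (hθ : Real.sin θ ≠ 0) (hsum : n * ψ + r * θ = π) :
    trinomial n r (Real.sin (θ + ψ) / Real.sin θ) (Real.sin ψ / Real.sin θ) (exp (θ * I)) = 0 := by
  have h : (n : ℂ) * ((-ψ : ℝ) * I) = r * (θ * I) - π * I := by
    have hsum' := congrArg ((↑) : ℝ → ℂ) hsum
    push_cast at hsum' ⊢
    linear_combination (-I) * hsum'
  rw [trinomial, sub_exp_mul_I_mul_eq hθ, ← Complex.exp_nat_mul, ← Complex.exp_nat_mul, h,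
    Complex.exp_sub, exp_pi_mul_I]
  ring

theorem triangleAngle_sin_div (hθ : 0 < θ) (hψ : 0 < ψ) (hθψ : θ + ψ < π) :
    triangleAngle (Real.sin (θ + ψ) / Real.sin θ) 1 (Real.sin ψ / Real.sin θ) = θ ∧
      triangleAngle (Real.sin (θ + ψ) / Real.sin θ) (Real.sin ψ / Real.sin θ) 1 = ψ := by
  have hsθ : 0 < Real.sin θ := sin_pos_of_pos_of_lt_pi hθ (by linarith)
  have ha : 0 < Real.sin (θ + ψ) / Real.sin θ :=
    div_pos (sin_pos_of_pos_of_lt_pi (by linarith) hθψ) hsθ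
  have hb : 0 < Real.sin ψ / Real.sin θ := div_pos (sin_pos_of_pos_of_lt_pi hψ (by linarith)) hsθ
  have hsub := sub_exp_mul_I_mul_eq (ψ := ψ) hsθ.ne'
  constructor
  · have := arg_eq_triangleAngle ha (z := exp (θ * I) * (Real.sin ψ / Real.sin θ : ℝ))
      (mul_ne_zero (exp_ne_zero _) (ofReal_ne_zero.2 hb.ne'))
      (by rw [im_mul_ofReal, exp_ofReal_mul_I_im]; positivity)
    rwa [hsub, norm_exp_ofReal_mul_I, norm_mul, norm_exp_ofReal_mul_I, one_mul, norm_real,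
      norm_of_nonneg hb.le, mul_comm, arg_real_mul _ hb, Complex.arg_exp_mul_I,
      (toIocMod_eq_self _).2 ⟨by linarith, by linarith⟩, eq_comm] at this
  · have hsub' : (Real.sin (θ + ψ) / Real.sin θ : ℝ) - exp (ψ * I) =
        exp ((-θ : ℝ) * I) * (Real.sin ψ / Real.sin θ : ℝ) := by
      have := congrArg conj hsub
      simp only [map_sub, map_mul, conj_ofReal, ← exp_conj, conj_I] at this
      push_cast at this ⊢
      simp only [mul_neg, neg_mul, neg_neg] at this ⊢
      linear_combination this
    have := arg_eq_triangleAngle ha (z := exp (ψ * I)) (exp_ne_zero _)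
      (by rw [exp_ofReal_mul_I_im]; exact (sin_pos_of_pos_of_lt_pi hψ (by linarith)).le)
    rwa [hsub', norm_exp_ofReal_mul_I, norm_mul, norm_exp_ofReal_mul_I, one_mul, norm_real,
      norm_of_nonneg hb.le, Complex.arg_exp_mul_I, (toIocMod_eq_self _).2 ⟨by linarith, by linarith⟩,
      eq_comm] at this

theorem eq_exp_or_eq_exp_of_trinomial_eq_zero (hn : 0 < n) (hr : 0 < r) (hnr : 1 < max n r)
    (hθ : 0 < θ) (hψ : 0 < ψ) (hsum : n * ψ + r * θ = π) {ζ : ℂ}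
    (hζ : trinomial n r (Real.sin (θ + ψ) / Real.sin θ) (Real.sin ψ / Real.sin θ) ζ = 0)
    (hnorm : ‖ζ‖ ≤ 1) : ζ = exp (θ * I) ∨ ζ = exp (-θ * I) := by
  have hn' : (1 : ℝ) ≤ n := by exact_mod_cast hn
  have hr' : (1 : ℝ) ≤ r := by exact_mod_cast hr
  have hθψ : θ + ψ < π := by
    rcases (by omega : 2 ≤ n ∨ 2 ≤ r) with h | h
    · have : (2 : ℝ) ≤ n := by exact_mod_cast h
      nlinarith
    · have : (2 : ℝ) ≤ r := by exact_mod_cast h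
      nlinarith
  have hsθ : 0 < Real.sin θ := sin_pos_of_pos_of_lt_pi hθ (by linarith)
  have ha : 0 < Real.sin (θ + ψ) / Real.sin θ :=
    div_pos (sin_pos_of_pos_of_lt_pi (by linarith) hθψ) hsθ
  have hb : 0 < Real.sin ψ / Real.sin θ := div_pos (sin_pos_of_pos_of_lt_pi hψ (by linarith)) hsθ
  have hside : ∀ σ ∈ Ioc (0 : ℝ) 1,
      Real.sin ψ / Real.sin θ * σ ^ n < Real.sin (θ + ψ) / Real.sin θ + σ ^ r ∧
      σ ^ r < Real.sin (θ + ψ) / Real.sin θ + Real.sin ψ / Real.sin θ * σ ^ n := by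
    rintro σ ⟨hσ₀, hσ₁⟩
    have h₁ := sin_mul_pow_lt hn hr hnr hθ hψ hsum hσ₀ hσ₁
    have h₂ := sin_mul_pow_lt hr hn (max_comm n r ▸ hnr) hψ hθ (by linarith) hσ₀ hσ₁
    rw [add_comm ψ] at h₂
    constructor <;> rw [← sub_pos] <;> field_simp <;> linarith
  obtain ⟨hangle₁, hangleb⟩ := triangleAngle_sin_div hθ hψ hθψ
  have hπ : angleSum n r (Real.sin (θ + ψ) / Real.sin θ) (Real.sin ψ / Real.sin θ) 1 = π := by
    rw [angleSum, one_pow, one_pow, mul_one, hangle₁, hangleb, hsum]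
  have key := fun ξ hξ him hξ₁ ↦
    hangle₁ ▸ eq_exp_of_trinomial_eq_zero hn hr ha hb hside hπ (ξ := ξ) hξ him hξ₁
  rcases le_or_gt 0 ζ.im with him | him
  · exact .inl (key ζ hζ him hnorm)
  · refine .inr ?_
    have := key (conj ζ) (by rw [trinomial_conj, hζ, map_zero]) (by simp; linarith)
      (by rwa [norm_conj])
    rw [← conj_conj ζ, this, ← exp_conj]
    simp

end SineTriangle

theorem stmt_11_general (n r : ℕ) (hn : 0 < n) (hmax : 1 < max n r)
    (θ : ℝ) (hθ : θ ∈ Set.Ioo 0 (π / r)) (φ : ℝ)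
    (hφ : φ = (((n : ℝ) - 1) * π + r * θ) / n) (Q : ℂ → ℂ)
    (hQ : ∀ ζ, Q ζ = (((Real.sin (φ - θ) / Real.sin θ : ℝ) : ℂ)
        - ζ * ((Real.sin φ / Real.sin θ : ℝ) : ℂ)) ^ n + ζ ^ r) :
    Q (Complex.exp (θ * Complex.I)) = 0 ∧
    Q (Complex.exp (-θ * Complex.I)) = 0 ∧
    Complex.exp (θ * Complex.I) ≠ Complex.exp (-θ * Complex.I) ∧
    (∀ ζ : ℂ, Q ζ = 0 → ‖ζ‖ = 1 →
      ζ = Complex.exp (θ * Complex.I) ∨ ζ = Complex.exp (-θ * Complex.I)) ∧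
    (∀ ζ : ℂ, Q ζ = 0 → ζ ≠ Complex.exp (θ * Complex.I) →
      ζ ≠ Complex.exp (-θ * Complex.I) → 1 < ‖ζ‖) := by
  obtain ⟨hθ₀, hθr⟩ := hθ
  have hr : 0 < r := Nat.pos_of_ne_zero fun h ↦ by simp [h] at hθr; linarith
  have hrθ : r * θ < π := by rwa [lt_div_iff₀' (by positivity)] at hθr
  obtain ⟨ψ, rfl⟩ : ∃ ψ, φ = π - ψ := ⟨π - φ, by ring⟩
  have hn' : (n : ℝ) ≠ 0 := by positivity
  have hsum : n * ψ + r * θ = π := by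
    rw [eq_div_iff hn'] at hφ; linarith
  have hψ : 0 < ψ := by nlinarith
  obtain rfl : Q = trinomial n r (Real.sin (θ + ψ) / Real.sin θ) (Real.sin ψ / Real.sin θ) :=
    funext fun ζ ↦ by
      rw [hQ, trinomial, show π - ψ - θ = π - (θ + ψ) by ring, Real.sin_pi_sub, Real.sin_pi_sub]
  have hsθ : 0 < Real.sin θ :=
    sin_pos_of_pos_of_lt_pi hθ₀ (by nlinarith [(Nat.one_le_cast (α := ℝ)).2 hr])
  have hzero := trinomial_exp_mul_I_eq_zero hsθ.ne' hsum
  have hconj : exp (-θ * I) = conj (exp (θ * I)) := by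
    rw [← exp_conj, map_mul, conj_ofReal, conj_I, mul_neg, neg_mul]
  have hdisk := fun ζ hζ ↦ eq_exp_or_eq_exp_of_trinomial_eq_zero hn hr hmax hθ₀ hψ hsum (ζ := ζ) hζ
  refine ⟨hzero, by rw [hconj, trinomial_conj, hzero, map_zero], fun h ↦ ?_,
    fun ζ hζ h ↦ hdisk ζ hζ h.le, fun ζ hζ h₁ h₂ ↦ ?_⟩
  · have := congrArg im h
    rw [hconj, conj_im] at this
    linarith [exp_ofReal_mul_I_im θ]
  · by_contra! h
    rcases hdisk ζ hζ h with h | h <;> contradiction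

theorem stmt_11 (n r : ℕ) (hn : 0 < n) (hr : 0 < r) (hmax : 1 < max n r)
    (θ : ℝ) (hθ : θ ∈ Set.Ioo 0 (π / r)) (φ : ℝ)
    (hφ : φ = (((n : ℝ) - 1) * π + r * θ) / n) (Q : ℂ → ℂ)
    (hQ : ∀ ζ, Q ζ = (((Real.sin (φ - θ) / Real.sin θ : ℝ) : ℂ)
        - ζ * ((Real.sin φ / Real.sin θ : ℝ) : ℂ)) ^ n + ζ ^ r) :
    Q (Complex.exp (θ * Complex.I)) = 0 ∧
    Q (Complex.exp (-θ * Complex.I)) = 0 ∧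
    Complex.exp (θ * Complex.I) ≠ Complex.exp (-θ * Complex.I) ∧
    (∀ ζ : ℂ, Q ζ = 0 → ‖ζ‖ = 1 →
      ζ = Complex.exp (θ * Complex.I) ∨ ζ = Complex.exp (-θ * Complex.I)) ∧
    (∀ ζ : ℂ, Q ζ = 0 → ζ ≠ Complex.exp (θ * Complex.I) →
      ζ ≠ Complex.exp (-θ * Complex.I) → 1 < ‖ζ‖) :=
  stmt_11_general n r hn hmax θ hθ φ hφ Q hQ
end

section
/- Let r ≥ 2 be an integer and let θ ∈ (0, π/r). Let ω be any complex n-th root of −1 for some integer n ≥ 2. If ζ is a zero of R(ζ) = sin((n-1)π/n + rθ/n − θ) − ζ^n sin((n-1)π/n + rθ/n) − ω ζ^r sin θ with |ζ| = 1, then ζ^n = e^{iθ} or ζ^n = e^{-iθ}. -/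
open Real Complex
open ComplexConjugate

/-!
Since `|ζ| = |ω| = 1`, the equation `R(ζ) = 0` says that `w = ζ ^ n` lies on the unit circle and
on the circle `|sin (φ - θ) - w sin φ| = sin θ`. The identity
`sin (φ - θ) - e^{iθ} sin φ = -e^{iφ} sin θ` shows that `e^{iθ}` lies on both circles, and two such
circles (the second centred on the real axis, off the origin) meet only in a conjugate pair.
-/

lemma norm_eq_one_of_pow_eq_neg_one {ω : ℂ} {n : ℕ} (hn : n ≠ 0) (hω : ω ^ n = -1) :
    ‖ω‖ = 1 :=
  Complex.norm_eq_one_of_pow_eq_one (n := 2 * n) (by rw [pow_mul', hω]; norm_num) (by omega)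

lemma normSq_real_sub_real_mul {s a : ℝ} {w : ℂ} (hw : ‖w‖ = 1) :
    normSq ((s : ℂ) - a * w) = s ^ 2 - 2 * a * s * w.re + a ^ 2 := by
  have hw2 : w.re ^ 2 + w.im ^ 2 = 1 := by
    rw [← one_pow 2, ← hw, Complex.sq_norm, normSq_apply]; ring
  simp only [normSq_apply, sub_re, sub_im, mul_re, mul_im, ofReal_re, ofReal_im]
  linear_combination a ^ 2 * hw2

lemma eq_or_eq_conj_of_norm_real_sub_real_mul_eq {s a : ℝ} (hs : s ≠ 0) (ha : a ≠ 0) {w z : ℂ}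
    (hw : ‖w‖ = 1) (hz : ‖z‖ = 1) (h : ‖(s : ℂ) - a * w‖ = ‖(s : ℂ) - a * z‖) :
    w = z ∨ w = conj z := by
  have hre : w.re = z.re := by
    have h2 := congrArg (· ^ 2) h
    simp only [Complex.sq_norm, normSq_real_sub_real_mul hw, normSq_real_sub_real_mul hz] at h2
    have : 2 * a * s ≠ 0 := by positivity
    exact mul_left_cancel₀ this (by linarith)
  have him : w.im ^ 2 = z.im ^ 2 := by
    have hnorm := congrArg (· ^ 2) (hw.trans hz.symm)
    simp only [Complex.sq_norm, normSq_apply, hre] at hnorm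
    nlinarith
  rcases sq_eq_sq_iff_eq_or_eq_neg.mp him with him | him
  · exact .inl (Complex.ext hre him)
  · exact .inr (Complex.ext (by simp [hre]) (by simp [him]))

lemma real_sin_sub_mul_exp_mul_I (φ θ : ℝ) :
    (Real.sin (φ - θ) : ℂ) - Real.sin φ * exp (θ * I) = -(Real.sin θ * exp (φ * I)) := by
  simp only [exp_mul_I, ofReal_sin, ofReal_sub, Complex.sin_sub]
  ring

lemma conj_exp_ofReal_mul_I (θ : ℝ) : conj (exp (θ * I)) = exp (-θ * I) := by
  rw [← exp_conj, map_mul, conj_ofReal, conj_I, neg_mul, mul_neg]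

lemma theta_lt_phi_lt_pi {n r : ℕ} (hn : 2 ≤ n) {θ : ℝ} (hθ : θ ∈ Set.Ioo 0 (π / r)) :
    θ < (((n : ℝ) - 1) * π + r * θ) / n ∧ (((n : ℝ) - 1) * π + r * θ) / n < π := by
  obtain ⟨hθ0, hθr⟩ := hθ
  have hn2 : (2 : ℝ) ≤ n := by exact_mod_cast hn
  have hr : (1 : ℝ) ≤ r := by
    rcases Nat.eq_zero_or_pos r with h | h
    · simp [h] at hθr; linarith
    · exact_mod_cast h
  have hrθ : r * θ < π := by rwa [lt_div_iff₀ (by linarith), mul_comm] at hθr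
  constructor
  · have hθπ : θ < π := by nlinarith
    rw [lt_div_iff₀ (by linarith)]
    nlinarith [mul_lt_mul_of_pos_left hθπ (by linarith : (0 : ℝ) < n - 1)]
  · rw [div_lt_iff₀ (by linarith)]; nlinarith

theorem stmt_12_general (n r : ℕ) (hn : 2 ≤ n)
    (θ : ℝ) (hθ : θ ∈ Set.Ioo 0 (π / r)) (φ : ℝ)
    (hφ : φ = (((n : ℝ) - 1) * π + r * θ) / n)
    (ω : ℂ) (hω : ω ^ n = -1)
    (ζ : ℂ) (hζ : ‖ζ‖ = 1)
    (hR : ((Real.sin (φ - θ) : ℝ) : ℂ) - ζ ^ n * ((Real.sin φ : ℝ) : ℂ)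
        - ω * ζ ^ r * ((Real.sin θ : ℝ) : ℂ) = 0) :
    ζ ^ n = Complex.exp (θ * Complex.I) ∨ ζ ^ n = Complex.exp (-θ * Complex.I) := by
  obtain ⟨hθφ, hφπ⟩ := theta_lt_phi_lt_pi hn hθ
  rw [← hφ] at hθφ hφπ
  have hsinφ : Real.sin φ ≠ 0 := (sin_pos_of_pos_of_lt_pi (hθ.1.trans hθφ) hφπ).ne'
  have hsinφθ : Real.sin (φ - θ) ≠ 0 :=
    (sin_pos_of_pos_of_lt_pi (by linarith) (by linarith [hθ.1])).ne'
  have hω1 : ‖ω‖ = 1 := norm_eq_one_of_pow_eq_neg_one (by omega) hω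
  have hζn : ‖ζ ^ n‖ = 1 := by rw [norm_pow, hζ, one_pow]
  have hdist : ‖(Real.sin (φ - θ) : ℂ) - Real.sin φ * ζ ^ n‖ =
      ‖(Real.sin (φ - θ) : ℂ) - Real.sin φ * exp (θ * I)‖ := by
    rw [real_sin_sub_mul_exp_mul_I, show (Real.sin (φ - θ) : ℂ) - Real.sin φ * ζ ^ n =
      ω * ζ ^ r * Real.sin θ by linear_combination hR]
    simp [hω1, hζ]
  rcases eq_or_eq_conj_of_norm_real_sub_real_mul_eq hsinφθ hsinφ hζn (norm_exp_ofReal_mul_I θ)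
    hdist with h | h
  exacts [.inl h, .inr (h.trans (conj_exp_ofReal_mul_I θ))]

theorem stmt_12 (n r : ℕ) (hn : 2 ≤ n) (hr : 2 ≤ r)
    (θ : ℝ) (hθ : θ ∈ Set.Ioo 0 (π / r)) (φ : ℝ)
    (hφ : φ = (((n : ℝ) - 1) * π + r * θ) / n)
    (ω : ℂ) (hω : ω ^ n = -1)
    (ζ : ℂ) (hζ : ‖ζ‖ = 1)
    (hR : ((Real.sin (φ - θ) : ℝ) : ℂ) - ζ ^ n * ((Real.sin φ : ℝ) : ℂ)
        - ω * ζ ^ r * ((Real.sin θ : ℝ) : ℂ) = 0) :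
    ζ ^ n = Complex.exp (θ * Complex.I) ∨ ζ ^ n = Complex.exp (-θ * Complex.I) :=
  stmt_12_general n r hn θ hθ φ hφ ω hω ζ hζ hR
end

section
/- Let n = r ≥ 2, θ ∈ (0, π/n), and φ = ((n-1)π + nθ)/n. The polynomial Q(ζ) = (sin(φ-θ)/sin θ − ζ sin φ/sin θ)^n + ζ^n has only simple zeros. -/
/-!
With `a = sin (φ - θ) / sin θ`, `b = sin φ / sin θ` and `u = a - ζ b`, a common zero of `Q` and
`Q' = n (ζ^(n-1) - b u^(n-1))` gives `a u^(n-1) = (ζ b + u) u^(n-1) = ζ^n + u^n = 0`, which forces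
`a = 0`. But `φ - θ = π - π / n`, so `a = sin (π / n) / sin θ > 0`.
-/

open Real Complex

theorem eq_zero_of_sub_mul_pow_add_pow_eq_zero {K : Type*} [Field K] {n : ℕ} (hn : n ≠ 0)
    {a b z : K} (h : (a - z * b) ^ n + z ^ n = 0)
    (h' : z ^ (n - 1) = b * (a - z * b) ^ (n - 1)) : a = 0 := by
  obtain ⟨u, hu⟩ : ∃ u, u = a - z * b := ⟨_, rfl⟩
  rw [← hu] at h h'
  have hpow (x : K) : x ^ n = x * x ^ (n - 1) := by
    rw [← pow_succ', Nat.sub_add_cancel (Nat.one_le_iff_ne_zero.2 hn)]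
  have hau : a * u ^ (n - 1) = 0 := by
    calc a * u ^ (n - 1) = z * (b * u ^ (n - 1)) + u * u ^ (n - 1) := by rw [hu]; ring
      _ = 0 := by rw [← h', ← hpow, ← hpow, add_comm, h]
  rcases mul_eq_zero.1 hau with ha | hu0
  · exact ha
  have hu0 : u = 0 := eq_zero_of_pow_eq_zero hu0
  have hz : z = 0 := eq_zero_of_pow_eq_zero (n := n) (by simpa [hu0, zero_pow hn] using h)
  calc a = u + z * b := by rw [hu]; ring
    _ = 0 := by rw [hu0, hz]; ring

section

variable {𝕜 : Type*} [NontriviallyNormedField 𝕜]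

theorem hasDerivAt_sub_mul_pow_add_pow (a b z : 𝕜) (n : ℕ) :
    HasDerivAt (fun z => (a - z * b) ^ n + z ^ n)
      (n * (z ^ (n - 1) - b * (a - z * b) ^ (n - 1))) z := by
  have hlin : HasDerivAt (fun z => a - z * b) (-b) z := by
    simpa using ((hasDerivAt_id z).mul_const b).const_sub a
  exact ((hlin.pow n).add (hasDerivAt_pow n z)).congr_deriv (by ring)

theorem deriv_sub_mul_pow_add_pow_ne_zero [CharZero 𝕜] {n : ℕ} (hn : n ≠ 0) {a b z : 𝕜}
    (ha : a ≠ 0) (h : (a - z * b) ^ n + z ^ n = 0) :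
    deriv (fun z => (a - z * b) ^ n + z ^ n) z ≠ 0 := by
  rw [(hasDerivAt_sub_mul_pow_add_pow a b z n).deriv, mul_ne_zero_iff, sub_ne_zero]
  exact ⟨Nat.cast_ne_zero.2 hn, fun h' => ha (eq_zero_of_sub_mul_pow_add_pow_eq_zero hn h h')⟩

end

theorem stmt_14 (n : ℕ) (hn : 2 ≤ n)
    (θ : ℝ) (hθ : θ ∈ Set.Ioo 0 (π / n)) (φ : ℝ)
    (hφ : φ = (((n : ℝ) - 1) * π + n * θ) / n) (Q : ℂ → ℂ)
    (hQ : ∀ ζ, Q ζ = (((Real.sin (φ - θ) / Real.sin θ : ℝ) : ℂ)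
        - ζ * ((Real.sin φ / Real.sin θ : ℝ) : ℂ)) ^ n + ζ ^ n) :
    ∀ ζ : ℂ, Q ζ = 0 → deriv Q ζ ≠ 0 := by
  have hπn : π / n < π := div_lt_self pi_pos (by exact_mod_cast hn)
  have hφθ : φ - θ = π - π / n := by rw [hφ]; field_simp; ring
  have hsinφθ : 0 < Real.sin (φ - θ) := by
    rw [hφθ, Real.sin_pi_sub]
    exact sin_pos_of_pos_of_lt_pi (by positivity) hπn
  have ha : 0 < Real.sin (φ - θ) / Real.sin θ :=
    div_pos hsinφθ (sin_pos_of_pos_of_lt_pi hθ.1 (hθ.2.trans hπn))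
  obtain rfl : Q = _ := funext hQ
  intro ζ hζ
  exact deriv_sub_mul_pow_add_pow_ne_zero (by omega) (by exact_mod_cast ha.ne') hζ
end

section
/- Let n, h be positive integers with h < n/20 and n > 85, and for j ≥ 1 set a_j = (−1)^j (hn)^{jn−1}/((nj−1)!). Then |a_{h−1}| + |a_{h+1}| < |a_h| (interpreting a_0 = 0 if h = 1); more precisely, with P₁ = Π_{ℓ=0}^{n−1}(1 − (n−ℓ)/(nh)) and P₂ = Π_{ℓ=1}^{n−1}(1 + ℓ/(nh)), one has P₁ < exp(−(n+1)/(2h)), P₂ > exp((n−1)/(4h)), and P₁ + 1/P₂ < 1. -/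
/-!
Passing from `a_h` to `a_{h+1}` multiplies by `(hn)^n` and divides by the `n` extra factorial factors
`nh, nh + 1, …, nh + n - 1`, so `|a_{h+1}| = |a_h| / P₂`; in the same way `|a_{h-1}| = P₁ |a_h|`.
Bounding each factor by `1 - x < exp (-x)`, resp. `exp (x / 2) < 1 + x` for `0 < x ≤ 2`, and
summing the exponents with Gauss' formula gives the two exponential bounds. Since `20 h < n`,
both exponents exceed `1` in absolute value, so `P₁ + 1 / P₂ < 2 / e < 1`.
-/

open Real Finset
open scoped Nat

lemma half_lt_log_one_add {x : ℝ} (h0 : 0 < x) (h2 : x ≤ 2) : x / 2 < log (1 + x) :=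
  calc x / 2 ≤ 2 * x / (x + 2) := by rw [div_le_div_iff₀ two_pos (by linarith)]; nlinarith
    _ < log (1 + x) := lt_log_one_add_of_pos h0

lemma exp_half_lt_one_add {x : ℝ} (h0 : 0 < x) (h2 : x ≤ 2) : exp (x / 2) < 1 + x := by
  simpa [exp_log (by linarith : 0 < 1 + x)] using exp_lt_exp.2 (half_lt_log_one_add h0 h2)

lemma exp_half_sum_lt_prod_one_add {ι : Type*} {s : Finset ι} {x : ι → ℝ}
    (hx0 : ∀ i ∈ s, 0 ≤ x i) (hx2 : ∀ i ∈ s, x i ≤ 2) (hpos : ∃ i ∈ s, 0 < x i) :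
    exp ((∑ i ∈ s, x i) / 2) < ∏ i ∈ s, (1 + x i) := by
  rw [sum_div, exp_sum]
  refine prod_lt_prod (fun _ _ ↦ exp_pos _) (fun i hi ↦ ?_) ?_
  · rcases (hx0 i hi).eq_or_lt with h | h
    · simp [← h]
    · exact (exp_half_lt_one_add h (hx2 i hi)).le
  · obtain ⟨i, hi, h⟩ := hpos
    exact ⟨i, hi, exp_half_lt_one_add h (hx2 i hi)⟩

lemma prod_one_sub_lt_exp_neg_sum {ι : Type*} {s : Finset ι} {x : ι → ℝ} (hs : s.Nonempty)
    (hx0 : ∀ i ∈ s, x i ≠ 0) (hx1 : ∀ i ∈ s, x i ≤ 1) :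
    ∏ i ∈ s, (1 - x i) < exp (-∑ i ∈ s, x i) := by
  induction hs using Finset.Nonempty.cons_induction with
  | singleton a => simpa using one_sub_lt_exp_neg (hx0 a (mem_singleton_self a))
  | cons a s _ _ ih =>
    simp only [mem_cons, forall_eq_or_imp] at hx0 hx1
    rw [prod_cons, sum_cons, neg_add, exp_add]
    calc (1 - x a) * ∏ i ∈ s, (1 - x i) ≤ (1 - x a) * exp (-∑ i ∈ s, x i) :=
          mul_le_mul_of_nonneg_left (ih hx0.2 hx1.2).le (sub_nonneg.2 hx1.1)
      _ < exp (-x a) * exp (-∑ i ∈ s, x i) :=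
          mul_lt_mul_of_pos_right (one_sub_lt_exp_neg hx0.1) (exp_pos _)

lemma add_one_div_lt_one_of_lt_exp_neg_one {p q : ℝ} (hp : p < exp (-1)) (hq : exp 1 < q) :
    p + 1 / q < 1 := by
  have hq' : 1 / q < exp (-1) := by
    rw [exp_neg, ← one_div]
    exact one_div_lt_one_div_of_lt (exp_pos 1) hq
  have he : exp (-1) < 1 / 2 := by
    rw [exp_neg, ← one_div]
    exact one_div_lt_one_div_of_lt two_pos (lt_trans (by norm_num) exp_one_gt_d9)
  linarith

lemma abs_neg_one_pow_mul_div {x y : ℝ} (hx : 0 ≤ x) (hy : 0 ≤ y) (j : ℕ) :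
    |(-1) ^ j * x / y| = x / y := by
  rw [abs_div, abs_mul, abs_pow, abs_neg, abs_one, one_pow, one_mul, abs_of_nonneg hx,
    abs_of_nonneg hy]

lemma sum_range_natCast (n : ℕ) : ∑ i ∈ range n, (i : ℝ) = n * (n - 1) / 2 := by
  induction n with
  | zero => simp
  | succ n ih => rw [sum_range_succ, ih]; push_cast; ring

lemma prod_Icc_one_sub_one_eq_prod_range {M : Type*} [CommMonoid M] {f : ℕ → M} (hf : f 0 = 1)
    (n : ℕ) : ∏ i ∈ Icc 1 (n - 1), f i = ∏ i ∈ range n, f i := by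
  cases n with
  | zero => simp
  | succ n => rw [prod_range_eq_mul_Ico f (by omega), hf, one_mul, Nat.add_sub_cancel,
      ← Ico_add_one_right_eq_Icc]

lemma pow_div_factorial_mul_prod {c : ℝ} (hc : c ≠ 0) (m k : ℕ) :
    c ^ (m + k) / (m + k)! * ∏ i ∈ range k, ((m + 1 + i : ℝ) / c) = c ^ m / m ! := by
  induction k with
  | zero => simp
  | succ k ih =>
    rw [prod_range_succ, ← ih, ← add_assoc, Nat.factorial_succ, pow_succ]
    push_cast
    field_simp
    ring

section

variable {n h : ℕ}

lemma pow_div_factorial_succ_mul_prod (hn : 0 < n) (hh : 0 < h) :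
    ((n : ℝ) * h) ^ (n * (h + 1) - 1) / (n * (h + 1) - 1)! *
      ∏ ℓ ∈ range n, (1 + ℓ / ((n : ℝ) * h)) = ((n : ℝ) * h) ^ (n * h - 1) / (n * h - 1)! := by
  obtain ⟨m, hm⟩ : ∃ m, n * h = m + 1 := ⟨n * h - 1, by have := Nat.mul_pos hn hh; omega⟩
  have hc : (n : ℝ) * h = m + 1 := by exact_mod_cast hm
  rw [show n * (h + 1) - 1 = m + n by rw [mul_add_one, hm]; omega, show n * h - 1 = m by omega, hc,
    ← pow_div_factorial_mul_prod m.cast_add_one_ne_zero m n]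
  congr 1
  refine prod_congr rfl fun i _ ↦ ?_
  field_simp

lemma pow_div_factorial_mul_prod_one_sub (hn : 0 < n) (hh : 2 ≤ h) :
    ((n : ℝ) * h) ^ (n * h - 1) / (n * h - 1)! * ∏ ℓ ∈ range n, (1 - (n - ℓ) / ((n : ℝ) * h)) =
      ((n : ℝ) * h) ^ (n * (h - 1) - 1) / (n * (h - 1) - 1)! := by
  obtain ⟨m, hm⟩ : ∃ m, n * (h - 1) = m + 1 :=
    ⟨n * (h - 1) - 1, by have := Nat.mul_pos hn (by omega : 0 < h - 1); omega⟩
  have hnh : n * h = m + 1 + n := by rw [← hm, ← mul_add_one, Nat.sub_add_cancel (by omega)]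
  have hc : (n : ℝ) * h = m + 1 + n := by exact_mod_cast hnh
  rw [show n * h - 1 = m + n by omega, show n * (h - 1) - 1 = m by omega, hc,
    ← pow_div_factorial_mul_prod (by positivity) m n]
  congr 1
  refine prod_congr rfl fun i _ ↦ ?_
  field_simp
  ring

lemma prod_one_sub_lt_exp (hn : 0 < n) (hh : 0 < h) :
    ∏ ℓ ∈ range n, (1 - (n - ℓ) / ((n : ℝ) * h)) < exp (-((n : ℝ) + 1) / (2 * h)) := by
  have hnh : (0 : ℝ) < n * h := by positivity
  have hsum : ∑ ℓ ∈ range n, ((n : ℝ) - ℓ) / (n * h) = (n + 1) / (2 * h) := by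
    rw [← sum_div, sum_sub_distrib, sum_const, card_range, sum_range_natCast, nsmul_eq_mul]
    field_simp
    ring
  rw [neg_div, ← hsum]
  refine prod_one_sub_lt_exp_neg_sum (nonempty_range_iff.2 hn.ne') (fun ℓ hℓ ↦ ?_) fun ℓ hℓ ↦ ?_
  · have : (ℓ : ℝ) < n := by exact_mod_cast mem_range.1 hℓ
    exact (div_pos (by linarith) hnh).ne'
  · rw [div_le_one hnh]
    have : (1 : ℝ) ≤ h := by exact_mod_cast hh
    nlinarith [(Nat.cast_nonneg ℓ : (0 : ℝ) ≤ ℓ)]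

lemma exp_lt_prod_one_add (hn : 1 < n) (hh : 0 < h) :
    exp (((n : ℝ) - 1) / (4 * h)) < ∏ ℓ ∈ range n, (1 + ℓ / ((n : ℝ) * h)) := by
  have hnh : (0 : ℝ) < n * h := by positivity
  have hsum : (∑ ℓ ∈ range n, (ℓ : ℝ) / (n * h)) / 2 = (n - 1) / (4 * h) := by
    rw [← sum_div, sum_range_natCast]
    field_simp
    ring
  rw [← hsum]
  refine exp_half_sum_lt_prod_one_add (fun ℓ _ ↦ by positivity) (fun ℓ hℓ ↦ ?_)
    ⟨1, mem_range.2 hn, by positivity⟩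
  have : (ℓ : ℝ) < n := by exact_mod_cast mem_range.1 hℓ
  have : (1 : ℝ) ≤ h := by exact_mod_cast hh
  rw [div_le_iff₀ hnh]
  nlinarith

end

theorem stmt_19_general (n h : ℕ) (hh : 1 ≤ h) (hhn : (h : ℝ) < (n : ℝ) / 20)
    (P₁ P₂ : ℝ)
    (hP₁ : P₁ = ∏ ℓ ∈ Finset.range n, (1 - ((n : ℝ) - ℓ) / ((n : ℝ) * h)))
    (hP₂ : P₂ = ∏ ℓ ∈ Finset.Icc 1 (n - 1), (1 + (ℓ : ℝ) / ((n : ℝ) * h)))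
    (a : ℕ → ℝ)
    (ha : ∀ j, a j = if j = 0 then 0 else
      (-1 : ℝ) ^ j * ((h : ℝ) * n) ^ (j * n - 1) / (Nat.factorial (n * j - 1))) :
    P₁ < Real.exp (-((n : ℝ) + 1) / (2 * h)) ∧
    Real.exp (((n : ℝ) - 1) / (4 * h)) < P₂ ∧
    P₁ + 1 / P₂ < 1 ∧
    |a (h - 1)| + |a (h + 1)| < |a h| := by
  have hh' : (1 : ℝ) ≤ h := by exact_mod_cast hh
  have hn : 1 < n := by exact_mod_cast (show (1 : ℝ) < n by linarith)
  have hn0 : 0 < n := by omega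
  have hP₂' : P₂ = ∏ ℓ ∈ range n, (1 + (ℓ : ℝ) / ((n : ℝ) * h)) :=
    hP₂.trans (prod_Icc_one_sub_one_eq_prod_range (by simp) n)
  have h₁ := hP₁ ▸ prod_one_sub_lt_exp hn0 hh
  have h₂ := hP₂' ▸ exp_lt_prod_one_add hn hh
  have h₃ : P₁ + 1 / P₂ < 1 := by
    refine add_one_div_lt_one_of_lt_exp_neg_one (h₁.trans (exp_lt_exp.2 ?_))
      ((exp_lt_exp.2 ?_).trans h₂)
    · rw [div_lt_iff₀ (by positivity)]; linarith
    · rw [lt_div_iff₀ (by positivity)]; linarith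
  refine ⟨h₁, h₂, h₃, ?_⟩
  have habs : ∀ j ≠ 0, |a j| = ((n : ℝ) * h) ^ (n * j - 1) / (n * j - 1)! := fun j hj ↦ by
    rw [ha, if_neg hj, abs_neg_one_pow_mul_div (by positivity) (by positivity), mul_comm (h : ℝ),
      mul_comm j]
  have hA : |a (h - 1)| ≤ P₁ * |a h| := by
    rcases (by omega : h = 1 ∨ 2 ≤ h) with rfl | h2
    · rw [hP₁, prod_eq_zero (mem_range.2 hn0) (by simp [hn0.ne'])]
      simp [ha]
    · rw [habs _ (by omega), habs _ (by omega), ← pow_div_factorial_mul_prod_one_sub hn0 h2, hP₁,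
        mul_comm]
  have hB : |a (h + 1)| = |a h| / P₂ := by
    rw [eq_div_iff ((exp_pos _).trans h₂).ne', habs _ (by omega), habs _ (by omega), hP₂',
      pow_div_factorial_succ_mul_prod hn0 hh]
  calc |a (h - 1)| + |a (h + 1)| ≤ (P₁ + 1 / P₂) * |a h| := by
        rw [hB, add_mul, one_div_mul_eq_div]; linarith
    _ < |a h| := (mul_lt_iff_lt_one_left (habs h (by omega) ▸ by positivity)).2 h₃

theorem stmt_19 (n h : ℕ) (hn : 85 < n) (hh : 1 ≤ h) (hhn : (h : ℝ) < (n : ℝ) / 20)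
    (P₁ P₂ : ℝ)
    (hP₁ : P₁ = ∏ ℓ ∈ Finset.range n, (1 - ((n : ℝ) - ℓ) / ((n : ℝ) * h)))
    (hP₂ : P₂ = ∏ ℓ ∈ Finset.Icc 1 (n - 1), (1 + (ℓ : ℝ) / ((n : ℝ) * h)))
    (a : ℕ → ℝ)
    (ha : ∀ j, a j = if j = 0 then 0 else
      (-1 : ℝ) ^ j * ((h : ℝ) * n) ^ (j * n - 1) / (Nat.factorial (n * j - 1))) :
    P₁ < Real.exp (-((n : ℝ) + 1) / (2 * h)) ∧
    Real.exp (((n : ℝ) - 1) / (4 * h)) < P₂ ∧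
    P₁ + 1 / P₂ < 1 ∧
    |a (h - 1)| + |a (h + 1)| < |a h| :=
  stmt_19_general n h hh hhn P₁ P₂ hP₁ hP₂ a ha
end
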